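/- arXiv:2112.02589 — 7 statements merged into one kernel-verified Lean document; each statement's English description precedes it below -/
import Mathlib

section
/- Let d ≥ 1 be an integer, h₀ ∈ (0,1], α ∈ (0,1], c_L ≥ 0, and let f : ℝ^d → ℝ be α-Hölder continuous with constant c_L. Let H(x) = s·(R x) + b be a histogram transform with R a d×d orthogonal matrix (Rᵀ R = I), s ≥ 1/h₀ (so the bin width 1/s is at most h₀), and b ∈ ℝ^d. Fix x ∈ [0,1]^d and let C := {x' ∈ [0,1]^d : ⌊H(x')⌋ = ⌊H(x)⌋} be the histogram cell of x intersected with [0,1]^d, and assume λ(C) > 0. Then the population histogram-transform regressor value at x, namely the cell average (1/λ(C)) ∫_C f dλ, satisfies ( (1/λ(C)) ∫_C f dλ − f(x) )² ≤ c_L² · d · h₀^{2α}. -/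
open MeasureTheory Matrix

/-- Pointwise approximation error of the population histogram-transform
regressor: if `f` is `α`-Hölder with constant `c_L`, `H(x) = s • (R x) + b` is
a histogram transform with orthogonal `R` and bin width `1/s ≤ h₀`, and `C` is
the histogram cell of `x ∈ [0,1]^d` intersected with `[0,1]^d` (of positive
Lebesgue measure), then the squared deviation of the cell average of `f` from
`f x` is at most `c_L² · d · h₀^(2α)`. -/
theorem stmt_3 (d : ℕ) (hd : 1 ≤ d) (h₀ α cL : ℝ)
    (hh₀ : h₀ ∈ Set.Ioc (0 : ℝ) 1) (hα : α ∈ Set.Ioc (0 : ℝ) 1) (hc : 0 ≤ cL)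
    (f : EuclideanSpace ℝ (Fin d) → ℝ)
    (hf : ∀ x y : EuclideanSpace ℝ (Fin d), |f x - f y| ≤ cL * ‖x - y‖ ^ α)
    (s : ℝ) (hs : 1 / h₀ ≤ s)
    (R : Matrix (Fin d) (Fin d) ℝ) (hR : Rᵀ * R = 1) (b : Fin d → ℝ)
    (x : EuclideanSpace ℝ (Fin d)) (hx : ∀ i, x i ∈ Set.Icc (0 : ℝ) 1)
    (C : Set (EuclideanSpace ℝ (Fin d)))
    (hC : C = {x' | (∀ i, x' i ∈ Set.Icc (0 : ℝ) 1) ∧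
        ∀ i, ⌊s * (∑ j, R i j * x' j) + b i⌋ = ⌊s * (∑ j, R i j * x j) + b i⌋})
    (hpos : 0 < volume C) :
    ((volume C).toReal⁻¹ * (∫ y in C, f y) - f x) ^ 2
      ≤ cL ^ 2 * d * h₀ ^ (2 * α) := by
  have hh0 : 0 < h₀ := hh₀.1
  have hs0 : 0 < s := lt_of_lt_of_le (by positivity) hs
  have hd1 : (1:ℝ) ≤ d := by exact_mod_cast hd
  have hα0 : 0 < α := hα.1
  -- orthogonality: column inner products
  have horth : ∀ j k, ∑ i, R i j * R i k = if j = k then (1:ℝ) else 0 := by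
    intro j k
    have := congrFun (congrFun hR j) k
    simpa [Matrix.mul_apply, Matrix.one_apply, Matrix.transpose_apply] using this
  have expand : ∀ v : Fin d → ℝ, ∑ i, (∑ j, R i j * v j)^2 = ∑ j, v j ^ 2 := by
    intro v
    calc ∑ i, (∑ j, R i j * v j)^2
        = ∑ i, ∑ j, ∑ k, (R i j * v j) * (R i k * v k) := by
          simp_rw [sq, Finset.sum_mul_sum]
      _ = ∑ j, ∑ k, (∑ i, R i j * R i k) * (v j * v k) := by
          rw [Finset.sum_comm]
          refine Finset.sum_congr rfl fun j _ => ?_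
          rw [Finset.sum_comm]
          refine Finset.sum_congr rfl fun k _ => ?_
          calc ∑ i, (R i j * v j) * (R i k * v k)
              = ∑ i, (R i j * R i k) * (v j * v k) :=
                Finset.sum_congr rfl fun i _ => by ring
            _ = (∑ i, R i j * R i k) * (v j * v k) := (Finset.sum_mul _ _ _).symm
      _ = ∑ j, v j ^ 2 := by
          simp_rw [horth, ite_mul, one_mul, zero_mul]
          refine Finset.sum_congr rfl fun j _ => ?_
          rw [Finset.sum_ite_eq Finset.univ j (fun k => v j * v k)]
          simp [sq]
  -- distance bound inside the cell
  have key : ∀ y ∈ C, ‖y - x‖ ≤ Real.sqrt d * h₀ := by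
    intro y hy
    rw [hC] at hy
    obtain ⟨-, hfl⟩ := hy
    have hcoord : ∀ i, (∑ j, R i j * (y j - x j))^2 ≤ h₀^2 := by
      intro i
      have h1 : |(s * (∑ j, R i j * y j) + b i) - (s * (∑ j, R i j * x j) + b i)| < 1 := by
        have heq := hfl i
        have l1 := Int.floor_le (s * (∑ j, R i j * y j) + b i)
        have l2 := Int.lt_floor_add_one (s * (∑ j, R i j * y j) + b i)
        have l3 := Int.floor_le (s * (∑ j, R i j * x j) + b i)
        have l4 := Int.lt_floor_add_one (s * (∑ j, R i j * x j) + b i)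
        rw [heq] at l1 l2
        rw [abs_lt]; push_cast at *; constructor <;> linarith
      have h2 : |s * ∑ j, R i j * (y j - x j)| < 1 := by
        have heq2 : s * ∑ j, R i j * (y j - x j)
            = (s * (∑ j, R i j * y j) + b i) - (s * (∑ j, R i j * x j) + b i) := by
          have : ∑ j, R i j * (y j - x j)
              = (∑ j, R i j * y j) - (∑ j, R i j * x j) := by
            rw [← Finset.sum_sub_distrib]
            exact Finset.sum_congr rfl fun j _ => by ring
          rw [this]; ring
        rw [heq2]; exact h1
      have h5 : |∑ j, R i j * (y j - x j)| ≤ h₀ := by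
        rw [abs_mul, abs_of_pos hs0] at h2
        have h4 : 1 ≤ s * h₀ := by
          rw [div_le_iff₀ hh0] at hs; linarith [mul_comm s h₀]
        nlinarith [abs_nonneg (∑ j, R i j * (y j - x j))]
      calc (∑ j, R i j * (y j - x j))^2 = |∑ j, R i j * (y j - x j)|^2 := (sq_abs _).symm
        _ ≤ h₀^2 := by nlinarith [abs_nonneg (∑ j, R i j * (y j - x j))]
    have hsum : ∑ j, (y j - x j)^2 ≤ d * h₀^2 := by
      rw [← expand (fun j => y j - x j)]
      calc ∑ i, (∑ j, R i j * (y j - x j))^2 ≤ ∑ _i : Fin d, h₀^2 :=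
            Finset.sum_le_sum fun i _ => hcoord i
        _ = d * h₀^2 := by simp [mul_comm]
    have hn : ‖y - x‖ = Real.sqrt (∑ j, (y j - x j)^2) := by
      rw [EuclideanSpace.norm_eq]
      congr 1
      refine Finset.sum_congr rfl fun j _ => ?_
      rw [Real.norm_eq_abs, sq_abs]
      congr 1
    rw [hn]
    calc Real.sqrt (∑ j, (y j - x j)^2) ≤ Real.sqrt (d * h₀^2) :=
          Real.sqrt_le_sqrt hsum
      _ = Real.sqrt d * h₀ := by
          rw [Real.sqrt_mul (by positivity), Real.sqrt_sq hh0.le]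
  -- uniform deviation bound
  set M : ℝ := cL * (Real.sqrt d * h₀) ^ α with hM
  have hM0 : 0 ≤ M := by positivity
  have hdev : ∀ y ∈ C, |f y - f x| ≤ M := by
    intro y hy
    refine (hf y x).trans ?_
    exact mul_le_mul_of_nonneg_left
      (Real.rpow_le_rpow (norm_nonneg _) (key y hy) hα0.le) hc
  -- measurability of C
  have hmeas : MeasurableSet C := by
    rw [hC]
    have : {x' : EuclideanSpace ℝ (Fin d) | (∀ i, x' i ∈ Set.Icc (0:ℝ) 1) ∧
        ∀ i, ⌊s * (∑ j, R i j * x' j) + b i⌋ = ⌊s * (∑ j, R i j * x j) + b i⌋}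
        = (⋂ i, (fun x' : EuclideanSpace ℝ (Fin d) => x' i) ⁻¹' Set.Icc 0 1) ∩
          ⋂ i, (fun x' : EuclideanSpace ℝ (Fin d) =>
            ⌊s * (∑ j, R i j * x' j) + b i⌋) ⁻¹' {⌊s * (∑ j, R i j * x j) + b i⌋} := by
      ext z; simp [Set.mem_iInter]
    rw [this]
    refine MeasurableSet.inter ?_ ?_
    · exact MeasurableSet.iInter fun i =>
        ((by fun_prop : Continuous fun x' : EuclideanSpace ℝ (Fin d) => x' i).measurable) measurableSet_Icc
    · refine MeasurableSet.iInter fun i => ?_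
      have hgm : Measurable fun x' : EuclideanSpace ℝ (Fin d) =>
          s * (∑ j, R i j * x' j) + b i := by
        apply Measurable.add_const
        apply Measurable.const_mul
        exact Finset.measurable_sum _ fun j _ =>
          ((by fun_prop : Continuous fun x' : EuclideanSpace ℝ (Fin d) => x' j).measurable).const_mul _
      exact (Int.measurable_floor.comp hgm) (measurableSet_singleton _)
  -- finiteness of volume
  have hfin : volume C < ⊤ := by
    have hb : Bornology.IsBounded C := by
      refine (Metric.isBounded_closedBall (x := x) (r := Real.sqrt d * h₀)).subset ?_
      intro y hy
      rw [Metric.mem_closedBall, dist_eq_norm]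
      exact key y hy
    exact hb.measure_lt_top
  -- continuity and integrability of f
  have hfc : Continuous f := by
    have hW : HolderWith ⟨cL, hc⟩ ⟨α, hα0.le⟩ f := by
      intro a b'
      rw [edist_dist, edist_dist, Real.dist_eq]
      calc ENNReal.ofReal |f a - f b'| ≤ ENNReal.ofReal (cL * dist a b' ^ α) :=
            ENNReal.ofReal_le_ofReal (by simpa [dist_eq_norm] using hf a b')
        _ = _ := by
            rw [ENNReal.ofReal_mul hc,
              ← ENNReal.ofReal_rpow_of_nonneg dist_nonneg hα0.le]
            congr 1
            · simp [ENNReal.ofReal, Real.toNNReal, hc]; rfl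
    exact hW.continuous (by exact_mod_cast hα0)
  have hint : IntegrableOn f C volume := by
    have hconst : IntegrableOn (fun _ : EuclideanSpace ℝ (Fin d) => |f x| + M) C volume :=
      integrableOn_const hfin.ne
    refine Integrable.mono' hconst (hfc.aestronglyMeasurable.restrict) ?_
    filter_upwards [ae_restrict_mem hmeas] with y hy
    have := hdev y hy
    rw [Real.norm_eq_abs]
    have h1 := abs_sub_abs_le_abs_sub (f y) (f x)
    linarith
  -- conclude
  set A : ℝ := (volume C).toReal with hA
  have hA0 : 0 < A := ENNReal.toReal_pos hpos.ne' hfin.ne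
  have hintc : ∫ y in C, f x ∂volume = A * f x := by
    rw [setIntegral_const]; simp [hA, smul_eq_mul, Measure.real]
  have hIb : |(∫ y in C, f y) - A * f x| ≤ M * A := by
    have hsub : (∫ y in C, f y) - A * f x = ∫ y in C, (f y - f x) := by
      rw [integral_sub hint (integrableOn_const hfin.ne), hintc]
    rw [hsub]
    have := norm_setIntegral_le_of_norm_le_const (μ := volume) (s := C) hfin
      (fun y hy => by rw [Real.norm_eq_abs]; exact hdev y hy)
      (f := fun y => f y - f x)
    simpa [Real.norm_eq_abs, Measure.real] using this
  have hfinal : |A⁻¹ * (∫ y in C, f y) - f x| ≤ M := by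
    have : A⁻¹ * (∫ y in C, f y) - f x = A⁻¹ * ((∫ y in C, f y) - A * f x) := by
      field_simp
    rw [this, abs_mul, abs_of_pos (inv_pos.2 hA0)]
    calc A⁻¹ * |(∫ y in C, f y) - A * f x| ≤ A⁻¹ * (M * A) := by
          exact mul_le_mul_of_nonneg_left hIb (by positivity)
      _ = M := by field_simp
  -- final squared estimate
  have hsq : (A⁻¹ * (∫ y in C, f y) - f x)^2 ≤ M^2 := by
    rw [← sq_abs]
    exact pow_le_pow_left₀ (abs_nonneg _) hfinal 2
  refine hsq.trans ?_
  have hM2 : M^2 = cL^2 * ((Real.sqrt d * h₀) ^ α)^2 := by rw [hM]; ring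
  rw [hM2]
  have h1 : ((Real.sqrt d * h₀) ^ α)^2 = (Real.sqrt d * h₀) ^ (2*α) := by
    rw [← Real.rpow_natCast ((Real.sqrt d * h₀) ^ α) 2, ← Real.rpow_mul (by positivity)]
    norm_num [mul_comm]
  rw [h1, Real.mul_rpow (Real.sqrt_nonneg _) hh0.le]
  have h2 : Real.sqrt d ^ (2*α) = (d:ℝ) ^ α := by
    rw [Real.rpow_mul (Real.sqrt_nonneg _)]
    congr 1
    rw [show ((2:ℝ)) = ((2:ℕ):ℝ) by norm_num, Real.rpow_natCast]
    exact Real.sq_sqrt (by positivity)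
  rw [h2]
  have h3 : (d:ℝ) ^ α ≤ (d:ℝ) := by
    calc (d:ℝ) ^ α ≤ (d:ℝ) ^ (1:ℝ) :=
          Real.rpow_le_rpow_of_exponent_le hd1 hα.2
      _ = d := Real.rpow_one _
  calc cL ^ 2 * ((d:ℝ)^α * h₀ ^ (2*α)) ≤ cL^2 * ((d:ℝ) * h₀^(2*α)) := by
        have h5 : (0:ℝ) ≤ h₀ ^ (2*α) := by positivity
        exact mul_le_mul_of_nonneg_left
          (mul_le_mul_of_nonneg_right h3 h5) (sq_nonneg cL)
    _ = cL^2 * d * h₀^(2*α) := by ring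
end

section
/- Pointwise form of the approximation-error bound for an ensemble of histogram-transform regressors: let d ≥ 1 be an integer, h₀ ∈ (0,1], α ∈ (0,1], c_L ≥ 0, and let f : ℝ^d → ℝ be α-Hölder continuous with constant c_L. Let T ≥ 1 and for each t ∈ {1,…,T} let H_t(x) = s_t·(R_t x) + b_t be a histogram transform with R_t a d×d orthogonal matrix, s_t ≥ 1/h₀, and b_t ∈ ℝ^d. Fix x ∈ [0,1]^d and for each t let C_t := {x' ∈ [0,1]^d : ⌊H_t(x')⌋ = ⌊H_t(x)⌋}, assuming λ(C_t) > 0. Then the averaged population regressor satisfies ( (1/T) Σ_{t=1}^T (1/λ(C_t)) ∫_{C_t} f dλ − f(x) )² ≤ d·c_L²·h₀^{2α} + T⁻¹·d·c_L²·h₀². -/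
open MeasureTheory Matrix

lemma rot_sum_sq (d : ℕ) (R : Matrix (Fin d) (Fin d) ℝ) (hR : Rᵀ * R = 1)
    (z : Fin d → ℝ) : ∑ i, (∑ j, R i j * z j) ^ 2 = ∑ j, (z j) ^ 2 := by
  have h1 : ∀ v : Fin d → ℝ, ∑ i, (v i) ^ 2 = v ⬝ᵥ v := by
    intro v; simp [dotProduct, sq]
  have h2 : (R.mulVec z) ⬝ᵥ (R.mulVec z) = z ⬝ᵥ z := by
    rw [Matrix.dotProduct_mulVec, ← Matrix.mulVec_transpose, Matrix.mulVec_mulVec, hR,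
      Matrix.one_mulVec]
  have h3 : ∀ i, R.mulVec z i = ∑ j, R i j * z j := by
    intro i; simp [Matrix.mulVec, dotProduct]
  calc ∑ i, (∑ j, R i j * z j) ^ 2 = ∑ i, (R.mulVec z i) ^ 2 := by simp [h3]
    _ = (R.mulVec z) ⬝ᵥ (R.mulVec z) := h1 _
    _ = z ⬝ᵥ z := h2
    _ = ∑ j, (z j) ^ 2 := (h1 z).symm

lemma holder_cont {d : ℕ} {cL α : ℝ} (hα : 0 < α) (hc : 0 ≤ cL)
    (f : EuclideanSpace ℝ (Fin d) → ℝ)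
    (hf : ∀ x y : EuclideanSpace ℝ (Fin d), |f x - f y| ≤ cL * ‖x - y‖ ^ α) :
    Continuous f := by
  have H : HolderWith cL.toNNReal α.toNNReal f := by
    intro x y
    rw [edist_dist, edist_dist, Real.dist_eq]
    have h1 : |f x - f y| ≤ cL * dist x y ^ α := by
      simpa [dist_eq_norm] using hf x y
    calc ENNReal.ofReal |f x - f y| ≤ ENNReal.ofReal (cL * dist x y ^ α) :=
          ENNReal.ofReal_le_ofReal h1
      _ = ENNReal.ofReal cL * ENNReal.ofReal (dist x y ^ α) := by
          rw [ENNReal.ofReal_mul hc]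
      _ = ↑cL.toNNReal * ENNReal.ofReal (dist x y) ^ (α.toNNReal : ℝ) := by
          rw [← ENNReal.ofReal_rpow_of_nonneg dist_nonneg hα.le,
            Real.coe_toNNReal α hα.le]; rfl
  exact H.continuous (by simpa using hα)

/-- Pointwise approximation-error bound for an ensemble of `T` population
histogram-transform regressors with orthogonal rotations and bin widths at
most `h₀`: the squared deviation of the averaged cell averages from `f x` is
at most `d·c_L²·h₀^(2α) + T⁻¹·d·c_L²·h₀²`. -/
theorem stmt_4 (d T : ℕ) (hd : 1 ≤ d) (hT : 1 ≤ T) (h₀ α cL : ℝ)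
    (hh₀ : h₀ ∈ Set.Ioc (0 : ℝ) 1) (hα : α ∈ Set.Ioc (0 : ℝ) 1) (hc : 0 ≤ cL)
    (f : EuclideanSpace ℝ (Fin d) → ℝ)
    (hf : ∀ x y : EuclideanSpace ℝ (Fin d), |f x - f y| ≤ cL * ‖x - y‖ ^ α)
    (s : Fin T → ℝ) (hs : ∀ t, 1 / h₀ ≤ s t)
    (R : Fin T → Matrix (Fin d) (Fin d) ℝ) (hR : ∀ t, (R t)ᵀ * R t = 1)
    (b : Fin T → Fin d → ℝ)
    (x : EuclideanSpace ℝ (Fin d)) (hx : ∀ i, x i ∈ Set.Icc (0 : ℝ) 1)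
    (C : Fin T → Set (EuclideanSpace ℝ (Fin d)))
    (hC : ∀ t, C t = {x' | (∀ i, x' i ∈ Set.Icc (0 : ℝ) 1) ∧
        ∀ i, ⌊s t * (∑ j, R t i j * x' j) + b t i⌋
              = ⌊s t * (∑ j, R t i j * x j) + b t i⌋})
    (hpos : ∀ t, 0 < volume (C t)) :
    ((T : ℝ)⁻¹ * (∑ t, (volume (C t)).toReal⁻¹ * (∫ y in C t, f y)) - f x) ^ 2
      ≤ d * cL ^ 2 * h₀ ^ (2 * α) + (T : ℝ)⁻¹ * d * cL ^ 2 * h₀ ^ 2 := by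
  obtain ⟨hh₀0, hh₀1⟩ := hh₀
  obtain ⟨hα0, hα1⟩ := hα
  have hd1 : (1 : ℝ) ≤ d := by exact_mod_cast hd
  have hsd : (0 : ℝ) < Real.sqrt d := Real.sqrt_pos.2 (by linarith)
  set r : ℝ := Real.sqrt d * h₀ with hr
  have hr0 : 0 < r := mul_pos hsd hh₀0
  set M : ℝ := cL * r ^ α with hM
  have hM0 : 0 ≤ M := mul_nonneg hc (Real.rpow_nonneg hr0.le α)
  have hcont : Continuous f := holder_cont hα0 hc f hf
  -- every point of C t is within distance r of x
  have hsub : ∀ t, C t ⊆ Metric.closedBall x r := by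
    intro t y hy
    rw [hC t] at hy
    obtain ⟨-, hy2⟩ := hy
    rw [Metric.mem_closedBall, dist_eq_norm]
    set z : Fin d → ℝ := fun j => y j - x j with hz
    have hst : 0 < s t := lt_of_lt_of_le (by positivity) (hs t)
    have hi : ∀ i, |∑ j, R t i j * z j| ≤ h₀ := by
      intro i
      have h1 : |(s t * (∑ j, R t i j * y j) + b t i) -
          (s t * (∑ j, R t i j * x j) + b t i)| < 1 :=
        Int.abs_sub_lt_one_of_floor_eq_floor (hy2 i)
      have h2 : (s t * (∑ j, R t i j * y j) + b t i) -
          (s t * (∑ j, R t i j * x j) + b t i) = s t * ∑ j, R t i j * z j := by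
        have hzz : ∑ j, R t i j * z j = ∑ j, R t i j * y j - ∑ j, R t i j * x j := by
          rw [← Finset.sum_sub_distrib]
          apply Finset.sum_congr rfl
          intro j _
          simp [hz]
          ring
        rw [hzz]
        ring
      rw [h2, abs_mul, abs_of_pos hst] at h1
      have h3 : |∑ j, R t i j * z j| < 1 / s t := by
        rw [lt_div_iff₀ hst]; linarith [h1]
      have h4 : 1 / s t ≤ h₀ := by
        rw [div_le_iff₀ hst]
        have := hs t
        calc (1:ℝ) = h₀ * (1 / h₀) := by field_simp
          _ ≤ h₀ * s t := by
            apply mul_le_mul_of_nonneg_left (hs t) hh₀0.le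
      linarith
    have hnorm : ‖y - x‖ = Real.sqrt (∑ i, (z i) ^ 2) := by
      rw [EuclideanSpace.norm_eq]
      congr 1
      apply Finset.sum_congr rfl
      intro i _
      have hyx : (y - x) i = y i - x i := rfl
      rw [Real.norm_eq_abs, sq_abs, hyx]
    rw [hnorm, ← rot_sum_sq d (R t) (hR t) z]
    have hsum : ∑ i, (∑ j, R t i j * z j) ^ 2 ≤ (d : ℝ) * h₀ ^ 2 := by
      calc ∑ i, (∑ j, R t i j * z j) ^ 2 ≤ ∑ _i : Fin d, h₀ ^ 2 := by
            apply Finset.sum_le_sum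
            intro i _
            rw [← sq_abs]
            exact pow_le_pow_left₀ (abs_nonneg _) (hi i) 2
        _ = (d : ℝ) * h₀ ^ 2 := by simp [mul_comm]
    calc Real.sqrt (∑ i, (∑ j, R t i j * z j) ^ 2) ≤ Real.sqrt ((d:ℝ) * h₀ ^ 2) :=
          Real.sqrt_le_sqrt hsum
      _ = r := by
          rw [Real.sqrt_mul (by positivity), Real.sqrt_sq hh₀0.le]
  -- key per-term bound
  have key : ∀ t, |(volume (C t)).toReal⁻¹ * (∫ y in C t, f y) - f x| ≤ M := by
    intro t
    have hfin : volume (C t) < ⊤ :=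
      lt_of_le_of_lt (measure_mono (hsub t)) (measure_closedBall_lt_top)
    set μ : ℝ := (volume (C t)).toReal with hμ
    have hμpos : 0 < μ := ENNReal.toReal_pos (hpos t).ne' hfin.ne
    have hint : IntegrableOn f (C t) volume :=
      ((hcont.continuousOn).integrableOn_compact (isCompact_closedBall x r)).mono_set
        (hsub t)
    have hintc : IntegrableOn (fun _ : EuclideanSpace ℝ (Fin d) => f x) (C t) volume :=
      integrableOn_const hfin.ne enorm_ne_top
    have hbound : ∀ y ∈ C t, ‖f y - f x‖ ≤ M := by
      intro y hy
      have h1 : ‖y - x‖ ≤ r := by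
        have := hsub t hy
        rwa [Metric.mem_closedBall, dist_eq_norm] at this
      calc ‖f y - f x‖ = |f y - f x| := rfl
        _ ≤ cL * ‖y - x‖ ^ α := hf y x
        _ ≤ cL * r ^ α := by
            apply mul_le_mul_of_nonneg_left _ hc
            exact Real.rpow_le_rpow (norm_nonneg _) h1 hα0.le
    have h1 : ‖∫ y in C t, (f y - f x)‖ ≤ M * μ :=
      norm_setIntegral_le_of_norm_le_const hfin hbound
    have h2 : ∫ y in C t, (f y - f x) = (∫ y in C t, f y) - μ * f x := by
      rw [integral_sub hint hintc, setIntegral_const, smul_eq_mul]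
      rfl
    have h3 : μ⁻¹ * (∫ y in C t, f y) - f x = μ⁻¹ * ∫ y in C t, (f y - f x) := by
      rw [h2, mul_sub]
      field_simp
    rw [h3, abs_mul, abs_of_nonneg (inv_nonneg.2 hμpos.le)]
    calc μ⁻¹ * |∫ y in C t, (f y - f x)| ≤ μ⁻¹ * (M * μ) := by
          apply mul_le_mul_of_nonneg_left h1 (inv_nonneg.2 hμpos.le)
      _ = M := by field_simp
  -- average
  have hT0 : (0 : ℝ) < T := by exact_mod_cast hT
  have havg : |(T : ℝ)⁻¹ * (∑ t, (volume (C t)).toReal⁻¹ * (∫ y in C t, f y)) - f x| ≤ M := by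
    have heq : (T : ℝ)⁻¹ * (∑ t, (volume (C t)).toReal⁻¹ * (∫ y in C t, f y)) - f x
        = (T : ℝ)⁻¹ * ∑ t, ((volume (C t)).toReal⁻¹ * (∫ y in C t, f y) - f x) := by
      rw [Finset.sum_sub_distrib, mul_sub, Finset.sum_const, Finset.card_univ,
        Fintype.card_fin, nsmul_eq_mul]
      field_simp
    rw [heq, abs_mul, abs_of_nonneg (inv_nonneg.2 hT0.le)]
    calc (T:ℝ)⁻¹ * |∑ t, ((volume (C t)).toReal⁻¹ * (∫ y in C t, f y) - f x)|
        ≤ (T:ℝ)⁻¹ * ∑ t, |(volume (C t)).toReal⁻¹ * (∫ y in C t, f y) - f x| := by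
          apply mul_le_mul_of_nonneg_left (Finset.abs_sum_le_sum_abs _ _)
            (inv_nonneg.2 hT0.le)
      _ ≤ (T:ℝ)⁻¹ * ∑ _t : Fin T, M := by
          apply mul_le_mul_of_nonneg_left (Finset.sum_le_sum fun t _ => key t)
            (inv_nonneg.2 hT0.le)
      _ = M := by
          rw [Finset.sum_const, Finset.card_univ, Fintype.card_fin, nsmul_eq_mul]
          field_simp
  -- finish
  have hM2 : M ^ 2 ≤ (d : ℝ) * cL ^ 2 * h₀ ^ (2 * α) := by
    have h1 : M ^ 2 = cL ^ 2 * (r ^ α) ^ 2 := by ring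
    have h2 : (r ^ α) ^ 2 = r ^ (2 * α) := by
      rw [← Real.rpow_natCast (r ^ α) 2, ← Real.rpow_mul hr0.le]
      norm_num
      ring_nf
    have h3 : r ^ (2 * α) = Real.sqrt d ^ (2 * α) * h₀ ^ (2 * α) :=
      Real.mul_rpow hsd.le hh₀0.le
    have h4 : Real.sqrt d ^ (2 * α) ≤ (d : ℝ) := by
      rw [Real.rpow_mul hsd.le]
      have h5 : Real.sqrt d ^ (2 : ℝ) = (d : ℝ) := by
        rw [Real.rpow_two, Real.sq_sqrt (by positivity : (0:ℝ) ≤ (d:ℝ))]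
      rw [h5]
      calc (d : ℝ) ^ α ≤ (d : ℝ) ^ (1 : ℝ) :=
            Real.rpow_le_rpow_of_exponent_le hd1 hα1
        _ = d := Real.rpow_one _
    have h6 : (0:ℝ) ≤ h₀ ^ (2 * α) := Real.rpow_nonneg hh₀0.le _
    rw [h1, h2, h3]
    calc cL ^ 2 * (Real.sqrt d ^ (2 * α) * h₀ ^ (2 * α))
        ≤ cL ^ 2 * ((d : ℝ) * h₀ ^ (2 * α)) :=
          mul_le_mul_of_nonneg_left (mul_le_mul_of_nonneg_right h4 h6) (sq_nonneg cL)
      _ = (d : ℝ) * cL ^ 2 * h₀ ^ (2 * α) := by ring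
  have hfinal : ((T : ℝ)⁻¹ * (∑ t, (volume (C t)).toReal⁻¹ * (∫ y in C t, f y)) - f x) ^ 2
      ≤ M ^ 2 := by
    rw [← sq_abs]
    exact pow_le_pow_left₀ (abs_nonneg _) havg 2
  have hpos2 : (0:ℝ) ≤ (T : ℝ)⁻¹ * d * cL ^ 2 * h₀ ^ 2 := by positivity
  linarith
end

section
/- For every integer n ≥ 1 and every real p ∈ (0,1], the inverse first moment of a Binomial(n,p) variable restricted to positive values satisfies Σ_{l=1}^{n} (n choose l) p^l (1−p)^{n−l} · (1/l) ≤ 2 / ((n+1) p). -/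
/-- Upper bound for the inverse first moment of a `Binomial(n,p)` variable
restricted to positive values:
`∑_{l=1}^n C(n,l) p^l (1-p)^(n-l) / l ≤ 2 / ((n+1) p)`. -/
theorem stmt_5 (n : ℕ) (hn : 1 ≤ n) (p : ℝ) (hp : p ∈ Set.Ioc (0 : ℝ) 1) :
    ∑ l ∈ Finset.Icc 1 n,
        (n.choose l : ℝ) * p ^ l * (1 - p) ^ (n - l) * (1 / (l : ℝ))
      ≤ 2 / (((n : ℝ) + 1) * p) := by
  obtain ⟨hp0, hp1⟩ := hp
  set q : ℝ := 1 - p with hq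
  have hq0 : 0 ≤ q := by simp [hq]; linarith
  have hnp : (0:ℝ) < ((n:ℝ)+1) * p := by positivity
  -- key termwise bound
  have key : ∀ l ∈ Finset.Icc 1 n,
      (n.choose l : ℝ) * p ^ l * q ^ (n - l) * (1 / (l : ℝ))
        ≤ 2 / (((n:ℝ)+1) * p) * (((n+1).choose (l+1) : ℝ) * p ^ (l+1) * q ^ ((n+1) - (l+1))) := by
    intro l hl
    simp only [Finset.mem_Icc] at hl
    obtain ⟨hl1, hln⟩ := hl
    have hl0 : (0:ℝ) < l := by exact_mod_cast hl1
    have hchoose : ((l:ℝ)+1) * ((n+1).choose (l+1) : ℝ) = ((n:ℝ)+1) * (n.choose l : ℝ) := by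
      have h : ((n+1) * n.choose l : ℕ) = ((n+1).choose (l+1) * (l+1) : ℕ) :=
        Nat.add_one_mul_choose_eq n l
      have h2 := congrArg (Nat.cast (R := ℝ)) h
      push_cast at h2
      linarith
    have hsub : (n+1) - (l+1) = n - l := by omega
    rw [hsub]
    have hcpos : (0:ℝ) ≤ (n.choose l : ℝ) := by positivity
    -- reduce to: C(n,l)/l ≤ 2 C(n+1,l+1)/(n+1) * p (after dividing p^l q^{n-l})
    have h1 : (n.choose l : ℝ) * (1 / l) ≤ 2 / (((n:ℝ)+1) * p) * (((n+1).choose (l+1) : ℝ) * p) := by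
      have hle : ((n:ℝ)+1) * (n.choose l : ℝ) ≤ 2 * (l:ℝ) * ((n+1).choose (l+1) : ℝ) := by
        rw [← hchoose]
        have hl1' : (1:ℝ) ≤ (l:ℝ) := by exact_mod_cast hl1
        have h2l : ((l:ℝ)+1) ≤ 2 * l := by linarith
        have hC : (0:ℝ) ≤ ((n+1).choose (l+1) : ℝ) := by positivity
        nlinarith
      rw [div_mul_eq_mul_div, le_div_iff₀ (by positivity)]
      have hmul := mul_le_mul_of_nonneg_right hle hp0.le
      calc (n.choose l : ℝ) * (1 / l) * (((n:ℝ)+1) * p)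
          = (((n:ℝ)+1) * (n.choose l) * p) * (1 / l) := by ring
        _ ≤ (2 * (l:ℝ) * ((n+1).choose (l+1) : ℝ) * p) * (1 / l) := by
            apply mul_le_mul_of_nonneg_right hmul (by positivity)
        _ = 2 * (((n+1).choose (l+1) : ℝ) * p) := by field_simp
    calc (n.choose l : ℝ) * p ^ l * q ^ (n - l) * (1 / l)
        = ((n.choose l : ℝ) * (1/l)) * (p ^ l * q ^ (n-l)) := by ring
      _ ≤ (2 / (((n:ℝ)+1) * p) * (((n+1).choose (l+1) : ℝ) * p)) * (p ^ l * q ^ (n-l)) := by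
          apply mul_le_mul_of_nonneg_right h1 (by positivity)
      _ = 2 / (((n:ℝ)+1) * p) * (((n+1).choose (l+1) : ℝ) * p ^ (l+1) * q ^ (n-l)) := by
          ring
  have step1 := Finset.sum_le_sum key
  rw [← Finset.mul_sum] at step1
  refine step1.trans ?_
  have hsum : ∑ l ∈ Finset.Icc 1 n, (((n+1).choose (l+1) : ℝ) * p ^ (l+1) * q ^ ((n+1) - (l+1))) ≤ 1 := by
    have himg : ∑ l ∈ Finset.Icc 1 n, (((n+1).choose (l+1) : ℝ) * p ^ (l+1) * q ^ ((n+1) - (l+1)))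
        = ∑ k ∈ (Finset.Icc 1 n).image (· + 1), (((n+1).choose k : ℝ) * p ^ k * q ^ ((n+1) - k)) := by
      rw [Finset.sum_image]
      intro a _ b _ h; simp only at h; omega
    rw [himg]
    have hsubset : (Finset.Icc 1 n).image (· + 1) ⊆ Finset.range (n+2) := by
      intro k hk
      simp only [Finset.mem_image, Finset.mem_Icc] at hk
      obtain ⟨a, ⟨_, ha⟩, rfl⟩ := hk
      simp only [Finset.mem_range]; omega
    have hfull : ∑ k ∈ Finset.range (n+2), (((n+1).choose k : ℝ) * p ^ k * q ^ ((n+1) - k)) = 1 := by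
      have := add_pow p q (n+1)
      have hpq : p + q = 1 := by simp [hq]
      rw [hpq, one_pow] at this
      rw [this]
      apply Finset.sum_congr rfl
      intro k _; ring
    rw [← hfull]
    apply Finset.sum_le_sum_of_subset_of_nonneg hsubset
    intro k _ _; positivity
  calc 2 / (((n:ℝ)+1) * p) * ∑ l ∈ Finset.Icc 1 n, (((n+1).choose (l+1) : ℝ) * p ^ (l+1) * q ^ ((n+1) - (l+1)))
      ≤ 2 / (((n:ℝ)+1) * p) * 1 := by
        apply mul_le_mul_of_nonneg_left hsum (by positivity)
    _ = 2 / (((n:ℝ)+1) * p) := mul_one _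
end

section
/- For every integer n ≥ 1 and every real p ∈ (0,1] with n·p ≥ 1, one has Σ_{l=1}^{n} (n choose l) p^l (1−p)^{n−l} · (1/l) ≥ 1 / (8 n p). -/
private lemma binom_tail_sum (n : ℕ) (p : ℝ) :
    ∑ l ∈ Finset.Icc 1 n, ((n+1).choose (l+1) : ℝ) * p^(l+1) * (1-p)^(n-l)
      = 1 - (1-p)^(n+1) - (n+1)*p*(1-p)^n := by
  have h2 := add_pow p (1-p) (n+1)
  rw [Finset.sum_range_succ', Finset.sum_range_succ'] at h2
  have h1 : (1:ℝ) = (p + (1-p))^(n+1) := by ring_nf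
  rw [h2] at h1
  simp only [Nat.choose_one_right, Nat.choose_zero_right, pow_zero, pow_one, zero_add,
    Nat.cast_add, Nat.cast_one, one_mul, mul_one, Nat.add_sub_cancel, Nat.sub_zero] at h1
  have h3 : ∑ l ∈ Finset.Icc 1 n, ((n+1).choose (l+1) : ℝ) * p^(l+1) * (1-p)^(n-l)
      = ∑ i ∈ Finset.range n, p^(i+1+1) * (1-p)^(n+1-(i+1+1)) * ((n+1).choose (i+1+1)) := by
    rw [show Finset.Icc 1 n = Finset.Ico 1 (n+1) by rfl, Finset.sum_Ico_eq_sum_range]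
    simp only [Nat.add_sub_cancel]
    apply Finset.sum_congr rfl
    intro i hi
    have e : n - (1+i) = n + 1 - (i+1+1) := by omega
    have e2 : 1 + i + 1 = i + 1 + 1 := by omega
    rw [e, e2]
    ring
  rw [h3]
  linarith [h1]

/-- If `n p ≥ 1`, the inverse first moment of a `Binomial(n,p)` variable
restricted to positive values is at least `1 / (8 n p)`. -/
theorem stmt_8 (n : ℕ) (hn : 1 ≤ n) (p : ℝ) (hp : p ∈ Set.Ioc (0 : ℝ) 1)
    (hnp : 1 ≤ (n : ℝ) * p) :
    1 / (8 * (n : ℝ) * p)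
      ≤ ∑ l ∈ Finset.Icc 1 n,
          (n.choose l : ℝ) * p ^ l * (1 - p) ^ (n - l) * (1 / (l : ℝ)) := by
  obtain ⟨hp0, hp1⟩ := hp
  have hq0 : (0:ℝ) ≤ 1 - p := by linarith
  have hn1 : (1:ℝ) ≤ (n:ℝ) := by exact_mod_cast hn
  have hnp1pos : (0:ℝ) < ((n:ℝ)+1) * p := by positivity
  -- termwise lower bound
  have hterm : ∀ l ∈ Finset.Icc 1 n,
      (1/(((n:ℝ)+1)*p)) * (((n+1).choose (l+1) : ℝ) * p^(l+1) * (1-p)^(n-l))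
        ≤ (n.choose l : ℝ) * p ^ l * (1 - p) ^ (n - l) * (1 / (l : ℝ)) := by
    intro l hl
    rw [Finset.mem_Icc] at hl
    obtain ⟨hl1, hl2⟩ := hl
    have hlr : (1:ℝ) ≤ (l:ℝ) := by exact_mod_cast hl1
    have hcast : ((n:ℝ)+1) * (n.choose l : ℝ) = ((n+1).choose (l+1) : ℝ) * ((l:ℝ)+1) := by
      have := Nat.add_one_mul_choose_eq n l
      exact_mod_cast this
    have hch : (0:ℝ) ≤ (n.choose l : ℝ) := by positivity
    have hpe : (0:ℝ) ≤ p ^ l := by positivity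
    have hqe : (0:ℝ) ≤ (1-p) ^ (n-l) := by positivity
    have heq : (1/(((n:ℝ)+1)*p)) * (((n+1).choose (l+1) : ℝ) * p^(l+1) * (1-p)^(n-l))
        = ((n.choose l : ℝ)/((l:ℝ)+1)) * p ^ l * (1 - p) ^ (n - l) := by
      rw [pow_succ]
      field_simp
      linear_combination (-((1 - p) ^ (n - l))) * hcast
    rw [heq]
    have hmono : (n.choose l : ℝ)/((l:ℝ)+1) ≤ (n.choose l : ℝ) * (1 / (l:ℝ)) := by
      rw [mul_one_div]
      exact div_le_div_of_nonneg_left hch (by linarith) (by linarith)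
    nlinarith [mul_le_mul_of_nonneg_right hmono (mul_nonneg hpe hqe)]
  -- sum lower bound
  have hsum : (1/(((n:ℝ)+1)*p)) * (1 - (1-p)^(n+1) - ((n:ℝ)+1)*p*(1-p)^n)
      ≤ ∑ l ∈ Finset.Icc 1 n,
          (n.choose l : ℝ) * p ^ l * (1 - p) ^ (n - l) * (1 / (l : ℝ)) := by
    calc (1/(((n:ℝ)+1)*p)) * (1 - (1-p)^(n+1) - ((n:ℝ)+1)*p*(1-p)^n)
        = ∑ l ∈ Finset.Icc 1 n,
            (1/(((n:ℝ)+1)*p)) * (((n+1).choose (l+1) : ℝ) * p^(l+1) * (1-p)^(n-l)) := by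
          rw [← Finset.mul_sum, binom_tail_sum n p]
      _ ≤ _ := Finset.sum_le_sum hterm
  -- bound on remainder
  have hqexp : (1-p)^n ≤ Real.exp (-((n:ℝ)*p)) := by
    have h1 : 1 - p ≤ Real.exp (-p) := by linarith [Real.add_one_le_exp (-p)]
    calc (1-p)^n ≤ Real.exp (-p) ^ n := pow_le_pow_left₀ hq0 h1 n
      _ = Real.exp (-((n:ℝ)*p)) := by rw [← Real.exp_nat_mul]; ring_nf
  have hkey : (1 + (n:ℝ)*p) * Real.exp (-((n:ℝ)*p)) ≤ 3/4 := by
    set x := (n:ℝ)*p with hx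
    have hx1 : 1 ≤ x := hnp
    have he1 : (8:ℝ)/3 < Real.exp 1 := by
      nlinarith [Real.exp_one_gt_d9]
    have hex : x ≤ Real.exp (x-1) := by linarith [Real.add_one_le_exp (x-1)]
    have hmul : Real.exp (x-1) * Real.exp (-x) = Real.exp (-1) := by
      rw [← Real.exp_add]; ring_nf
    have hinv : Real.exp (-1) ≤ 3/8 := by
      rw [Real.exp_neg]
      rw [inv_le_comm₀ (Real.exp_pos 1) (by norm_num)]
      linarith
    have hxp : (0:ℝ) < Real.exp (-x) := Real.exp_pos _
    nlinarith [mul_le_mul_of_nonneg_right hex (le_of_lt hxp)]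
  have hqb : (1-p)^n * (1 + (n:ℝ)*p) ≤ 3/4 := by
    have h1 : (0:ℝ) ≤ 1 + (n:ℝ)*p := by linarith
    nlinarith [mul_le_mul_of_nonneg_right hqexp h1]
  have hB : (1:ℝ)/4 ≤ 1 - (1-p)^(n+1) - ((n:ℝ)+1)*p*(1-p)^n := by
    have : (1-p)^(n+1) + ((n:ℝ)+1)*p*(1-p)^n = (1-p)^n * (1 + (n:ℝ)*p) := by
      rw [pow_succ]; ring
    linarith [hqb, this]
  -- conclude
  have hfinal : 1 / (8 * (n : ℝ) * p) ≤ (1/(((n:ℝ)+1)*p)) * (1/4) := by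
    rw [div_mul_eq_mul_div, one_mul, div_le_div_iff₀ (by positivity) (by positivity)]
    nlinarith
  calc 1 / (8 * (n : ℝ) * p) ≤ (1/(((n:ℝ)+1)*p)) * (1/4) := hfinal
    _ ≤ (1/(((n:ℝ)+1)*p)) * (1 - (1-p)^(n+1) - ((n:ℝ)+1)*p*(1-p)^n) := by
        apply mul_le_mul_of_nonneg_left hB (by positivity)
    _ ≤ _ := hsum
end

section
/- For every integer n ≥ 1 and every real p ∈ (0,1], the inverse second moment of a shifted Binomial(n−1,p) variable satisfies Σ_{l=0}^{n−1} ((n−1) choose l) p^l (1−p)^{n−1−l} · (1/(l+1)²) ≥ ( 1 − (1−p)^{n+1} − (n+1) p (1−p)^n ) / ( n (n+1) p² ). -/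
/-- Lower bound for the inverse second moment of a shifted `Binomial(n-1,p)`
variable: `∑_{l=0}^{n-1} C(n-1,l) p^l (1-p)^(n-1-l) / (l+1)²
  ≥ (1 - (1-p)^(n+1) - (n+1) p (1-p)^n) / (n (n+1) p²)`. -/
theorem stmt_9 (n : ℕ) (hn : 1 ≤ n) (p : ℝ) (hp : p ∈ Set.Ioc (0 : ℝ) 1) :
    (1 - (1 - p) ^ (n + 1) - ((n : ℝ) + 1) * p * (1 - p) ^ n)
        / ((n : ℝ) * ((n : ℝ) + 1) * p ^ 2)
      ≤ ∑ l ∈ Finset.range n,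
          ((n - 1).choose l : ℝ) * p ^ l * (1 - p) ^ (n - 1 - l)
            * (1 / ((l : ℝ) + 1) ^ 2) := by
  obtain ⟨hp0, hp1⟩ := hp
  obtain ⟨m, rfl⟩ : ∃ m, n = m + 1 := ⟨n - 1, by omega⟩
  set q : ℝ := 1 - p with hq
  have hq0 : 0 ≤ q := by simp only [hq]; linarith
  have binom : (∑ k ∈ Finset.range (m + 3),
      p ^ k * q ^ (m + 2 - k) * ((m + 2).choose k : ℝ)) = 1 := by
    have h := add_pow p q (m + 2)
    have hpq : p + q = 1 := by simp [hq]
    rw [hpq, one_pow] at h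
    exact h.symm
  have key : ∑ l ∈ Finset.range (m + 1),
      p ^ (l + 2) * q ^ (m - l) * ((m + 2).choose (l + 2) : ℝ)
      = 1 - q ^ (m + 2) - ((m : ℝ) + 2) * p * q ^ (m + 1) := by
    rw [Finset.sum_range_succ' _ (m + 2), Finset.sum_range_succ' _ (m + 1)] at binom
    have hsimp : ∀ l ∈ Finset.range (m + 1),
        p ^ (l + 1 + 1) * q ^ (m + 2 - (l + 1 + 1)) * ((m + 2).choose (l + 1 + 1) : ℝ)
        = p ^ (l + 2) * q ^ (m - l) * ((m + 2).choose (l + 2) : ℝ) := by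
      intro l hl
      have he : m + 2 - (l + 1 + 1) = m - l := by omega
      rw [he]
    rw [Finset.sum_congr rfl hsimp] at binom
    simp [Nat.choose_one_right] at binom
    linarith
  -- S2 equality
  have hden : ((m : ℝ) + 1) * ((m : ℝ) + 2) * p ^ 2 ≠ 0 := by positivity
  have S2 : ∑ l ∈ Finset.range (m + 1),
      (m.choose l : ℝ) * p ^ l * q ^ (m - l) * (1 / (((l : ℝ) + 1) * ((l : ℝ) + 2)))
      = (1 - q ^ (m + 2) - ((m : ℝ) + 2) * p * q ^ (m + 1))
        / (((m : ℝ) + 1) * ((m : ℝ) + 2) * p ^ 2) := by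
    rw [eq_div_iff hden, Finset.sum_mul, ← key]
    apply Finset.sum_congr rfl
    intro l hl
    have h1 := Nat.add_one_mul_choose_eq m l
    have h2 := Nat.add_one_mul_choose_eq (m + 1) (l + 1)
    have hnat : (m + 1) * (m + 2) * m.choose l
        = (l + 1) * (l + 2) * ((m + 2).choose (l + 2)) := by
      calc (m + 1) * (m + 2) * m.choose l
          = (m + 2) * ((m + 1) * m.choose l) := by ring
        _ = (m + 2) * ((m + 1).choose (l + 1) * (l + 1)) := by rw [h1]
        _ = ((m + 1 + 1) * (m + 1).choose (l + 1)) * (l + 1) := by ring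
        _ = ((m + 1 + 1).choose (l + 1 + 1) * (l + 1 + 1)) * (l + 1) := by rw [h2]
        _ = (l + 1) * (l + 2) * ((m + 2).choose (l + 2)) := by ring
    have e : ((m : ℝ) + 1) * ((m : ℝ) + 2) * (m.choose l : ℝ)
        = ((l : ℝ) + 1) * ((l : ℝ) + 2) * (((m + 2).choose (l + 2) : ℕ) : ℝ) := by
      exact_mod_cast congrArg (Nat.cast : ℕ → ℝ) hnat
    have hl1 : ((l : ℝ) + 1) ≠ 0 := by positivity
    have hl2 : ((l : ℝ) + 2) ≠ 0 := by positivity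
    field_simp
    linear_combination (p ^ l * q ^ (m - l) * p ^ 2) * e
  -- main chain
  have step : ∑ l ∈ Finset.range (m + 1),
      (m.choose l : ℝ) * p ^ l * q ^ (m - l) * (1 / (((l : ℝ) + 1) * ((l : ℝ) + 2)))
      ≤ ∑ l ∈ Finset.range (m + 1),
      (m.choose l : ℝ) * p ^ l * q ^ (m - l) * (1 / ((l : ℝ) + 1) ^ 2) := by
    apply Finset.sum_le_sum
    intro l hl
    have hc : (0 : ℝ) ≤ (m.choose l : ℝ) * p ^ l * q ^ (m - l) := by positivity
    apply mul_le_mul_of_nonneg_left _ hc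
    apply div_le_div_of_nonneg_left one_pos.le (by positivity)
    nlinarith [sq_nonneg ((l : ℝ) + 1)]
  have goaleq : ∀ l ∈ Finset.range (m + 1),
      ((m + 1 - 1).choose l : ℝ) * p ^ l * (1 - p) ^ (m + 1 - 1 - l) * (1 / ((l : ℝ) + 1) ^ 2)
      = (m.choose l : ℝ) * p ^ l * q ^ (m - l) * (1 / ((l : ℝ) + 1) ^ 2) := by
    intro l hl
    simp [hq]
  rw [Finset.sum_congr rfl goaleq]
  refine le_trans (le_of_eq ?_) (le_trans (le_of_eq S2.symm) step)
  push_cast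
  ring_nf
end

section
/- Sample-error upper bound for a single histogram regressor: let d ≥ 1 and n ≥ 1 be integers, M > 0, and h ∈ (0,1] be such that N := h^{−d} is a positive integer. Let A_1, …, A_N be pairwise disjoint Borel subsets of ℝ^d whose union is [0,1]^d. Let ν be a probability measure on ℝ^d × ℝ such that ν-almost every (x,y) satisfies x ∈ [0,1]^d and |y| ≤ M, and whose first marginal ν_X satisfies ν_X(A_j) = h^d for every j. Define the population histogram regressor f*_π := Σ_{j=1}^N c*_j 1_{A_j} with c*_j := h^{−d} ∫_{ℝ^d×ℝ} y 1_{A_j}(x) dν(x,y), and for a sample ω = ((x_1,y_1),…,(x_n,y_n)) ∈ (ℝ^d×ℝ)^n define the empirical histogram regressor f_ω := Σ_{j=1}^N c_j(ω) 1_{A_j}, where c_j(ω) := ( Σ_{i=1}^n y_i 1_{A_j}(x_i) ) / ( Σ_{i=1}^n 1_{A_j}(x_i) ) if Σ_{i=1}^n 1_{A_j}(x_i) > 0 and c_j(ω) := 0 otherwise. If n h^d ≥ 1, then the expected squared L²(ν_X) distance between the empirical and population regressors satisfies ∫_{(ℝ^d×ℝ)^n} ∫_{[0,1]^d} ( f_ω(x)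 − f*_π(x) )² dν_X(x) dν^{⊗n}(ω) ≤ 18 M² / ( n h^d ), where ν^{⊗n} denotes the n-fold product measure. -/
open MeasureTheory

lemma integrable_of_bound {α : Type*} [MeasurableSpace α] {μ : Measure α} [IsFiniteMeasure μ]
    {f : α → ℝ} (hf : AEStronglyMeasurable f μ) (C : ℝ) (h : ∀ᵐ z ∂μ, |f z| ≤ C) :
    Integrable f μ :=
  (integrable_const C).mono' hf (by simpa [Real.norm_eq_abs] using h)

lemma hist_ae_pi {α : Type*} [MeasurableSpace α] {ν : Measure α} [SigmaFinite ν] {n : ℕ}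
    {P : α → Prop} (h : ∀ᵐ z ∂ν, P z) :
    ∀ᵐ ω : Fin n → α ∂(Measure.pi fun _ => ν), ∀ i, P (ω i) := by
  rw [MeasureTheory.ae_all_iff]
  exact fun i => (Measure.tendsto_eval_ae_ae (μ := fun _ : Fin n => ν)).eventually h

lemma hist_pi_prod {α : Type*} [MeasurableSpace α] {ν : Measure α} [IsProbabilityMeasure ν]
    {n : ℕ} (f : Fin n → α → ℝ) :
    ∫ ω : Fin n → α, ∏ i, f i (ω i) ∂(Measure.pi fun _ => ν) = ∏ i, ∫ z, f i z ∂ν := by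
  letI : MeasureSpace α := ⟨ν⟩
  have h := MeasureTheory.integral_fintype_prod_eq_prod (ι := Fin n) (E := fun _ => α) f (μ := fun _ => ν)
  exact h

lemma hist_pi_single {α : Type*} [MeasurableSpace α] {ν : Measure α} [IsProbabilityMeasure ν]
    {n : ℕ} (i : Fin n) (g : α → ℝ) :
    ∫ ω : Fin n → α, g (ω i) ∂(Measure.pi fun _ => ν) = ∫ z, g z ∂ν := by
  have h := hist_pi_prod (ν := ν) (fun l => if l = i then g else fun _ => (1:ℝ))
  have e1 : ∀ ω : Fin n → α, ∏ l, (if l = i then g else fun _ => (1:ℝ)) (ω l) = g (ω i) := by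
    intro ω
    rw [Finset.prod_eq_single i (fun l _ hl => by simp [hl]) (by simp)]
    simp
  have e2 : ∏ l, ∫ z, (if l = i then g else fun _ => (1:ℝ)) z ∂ν = ∫ z, g z ∂ν := by
    rw [Finset.prod_eq_single i (fun l _ hl => by simp [hl]) (by simp)]
    simp
  simp_rw [e1] at h; rw [e2] at h; exact h

lemma hist_pi_pair {α : Type*} [MeasurableSpace α] {ν : Measure α} [IsProbabilityMeasure ν]
    {n : ℕ} {i k : Fin n} (hik : i ≠ k) (g1 g2 : α → ℝ) :
    ∫ ω : Fin n → α, g1 (ω i) * g2 (ω k) ∂(Measure.pi fun _ => ν)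
      = (∫ z, g1 z ∂ν) * ∫ z, g2 z ∂ν := by
  set F : Fin n → α → ℝ := fun l => if l = i then g1 else if l = k then g2 else fun _ => (1:ℝ)
    with hF
  have h := hist_pi_prod (ν := ν) F
  have e1 : ∀ ω : Fin n → α, ∏ l, F l (ω l) = g1 (ω i) * g2 (ω k) := by
    intro ω
    rw [← Finset.mul_prod_erase Finset.univ _ (Finset.mem_univ i),
        ← Finset.mul_prod_erase _ _ (Finset.mem_erase.2 ⟨Ne.symm hik, Finset.mem_univ k⟩),
        Finset.prod_eq_one (fun l hl => ?_)]
    · simp [hF, hik, hik.symm]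
    · simp only [Finset.mem_erase] at hl
      simp [hF, hl.1, hl.2.1]
  have e2 : ∏ l, ∫ z, F l z ∂ν = (∫ z, g1 z ∂ν) * ∫ z, g2 z ∂ν := by
    rw [← Finset.mul_prod_erase Finset.univ _ (Finset.mem_univ i),
        ← Finset.mul_prod_erase _ _ (Finset.mem_erase.2 ⟨Ne.symm hik, Finset.mem_univ k⟩),
        Finset.prod_eq_one (fun l hl => ?_)]
    · simp [hF, hik, hik.symm]
    · simp only [Finset.mem_erase] at hl
      simp [hF, hl.1, hl.2.1]
  simp_rw [e1] at h; rw [e2] at h; exact h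
lemma hist_sum_sq {α : Type*} [MeasurableSpace α] {ν : Measure α} [IsProbabilityMeasure ν]
    {n : ℕ} {f : α → ℝ} (hf : Measurable f) {C : ℝ} (hC : ∀ᵐ z ∂ν, |f z| ≤ C)
    (h0 : ∫ z, f z ∂ν = 0) :
    ∫ ω : Fin n → α, (∑ i, f (ω i)) ^ 2 ∂(Measure.pi fun _ => ν) = n * ∫ z, f z ^ 2 ∂ν := by
  have hint : ∀ i k : Fin n, Integrable (fun ω : Fin n → α => f (ω i) * f (ω k))
      (Measure.pi fun _ => ν) := by
    intro i k
    refine integrable_of_bound (((hf.comp (measurable_pi_apply i)).mul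
      (hf.comp (measurable_pi_apply k))).aestronglyMeasurable) (C * C) ?_
    filter_upwards [hist_ae_pi hC] with ω hω
    calc |f (ω i) * f (ω k)| = |f (ω i)| * |f (ω k)| := abs_mul _ _
    _ ≤ C * C := mul_le_mul (hω i) (hω k) (abs_nonneg _) ((abs_nonneg _).trans (hω i))
  have expand : ∀ ω : Fin n → α, (∑ i, f (ω i)) ^ 2 = ∑ i, ∑ k, f (ω i) * f (ω k) := by
    intro ω; rw [sq, Finset.sum_mul_sum]
  simp_rw [expand]
  rw [integral_finset_sum _ (fun i _ => integrable_finset_sum _ (fun k _ => hint i k))]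
  have key : ∀ i : Fin n, ∫ ω : Fin n → α, ∑ k, f (ω i) * f (ω k) ∂(Measure.pi fun _ => ν)
      = ∫ z, f z ^ 2 ∂ν := by
    intro i
    rw [integral_finset_sum _ (fun k _ => hint i k)]
    have term : ∀ k : Fin n, ∫ ω : Fin n → α, f (ω i) * f (ω k) ∂(Measure.pi fun _ => ν)
        = if k = i then ∫ z, f z ^ 2 ∂ν else 0 := by
      intro k
      by_cases hk : k = i
      · subst hk
        rw [if_pos rfl]
        have := hist_pi_single (ν := ν) k (fun z => f z ^ 2)
        simpa [sq] using this
      · rw [if_neg hk, hist_pi_pair (Ne.symm hk) f f, h0, mul_zero]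
    simp_rw [term]
    simp
  simp_rw [key]
  simp [Finset.sum_const, Finset.card_univ, nsmul_eq_mul]
set_option maxHeartbeats 2000000 in
lemma hist_cell_core {α : Type*} [MeasurableSpace α] (ν : Measure α) [IsProbabilityMeasure ν]
    (g χ : α → ℝ) (hg : Measurable g) (hχ : Measurable χ)
    (hχv : ∀ z, χ z = 0 ∨ χ z = 1) (hgχ : ∀ z, χ z = 0 → g z = 0)
    (M p : ℝ) (hM : 0 < M) (hp : 0 < p) (hp1 : p ≤ 1)
    (hgM : ∀ᵐ z ∂ν, |g z| ≤ M * χ z) (hχp : ∫ z, χ z ∂ν = p)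
    (n : ℕ) (hnp : 1 ≤ (n : ℝ) * p) :
    Integrable (fun ω : Fin n → α =>
        ((∑ i, g (ω i)) / (∑ i, χ (ω i)) - p⁻¹ * ∫ z, g z ∂ν) ^ 2)
      (Measure.pi fun _ => ν) ∧
    ∫ ω : Fin n → α, ((∑ i, g (ω i)) / (∑ i, χ (ω i)) - p⁻¹ * ∫ z, g z ∂ν) ^ 2
        ∂(Measure.pi fun _ => ν) ≤ 17 * M ^ 2 / (n * p) := by
  have hp' : p ≠ 0 := ne_of_gt hp
  have hnp0 : (0:ℝ) < (n:ℝ) * p := lt_of_lt_of_le one_pos hnp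
  have hχ0 : ∀ z, 0 ≤ χ z := fun z => by rcases hχv z with h | h <;> simp [h]
  have hχ1 : ∀ z, χ z ≤ 1 := fun z => by rcases hχv z with h | h <;> simp [h]
  have hχsq : ∀ z, χ z ^ 2 = χ z := fun z => by rcases hχv z with h | h <;> simp [h]
  have hMχ : ∀ z, M * χ z ≤ M := fun z =>
    mul_le_of_le_one_right (le_of_lt hM) (hχ1 z)
  have hgI : Integrable g ν := integrable_of_bound hg.aestronglyMeasurable M (by
    filter_upwards [hgM] with z hz; exact hz.trans (hMχ z))
  have hχI : Integrable χ ν := integrable_of_bound hχ.aestronglyMeasurable 1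
    (Filter.Eventually.of_forall fun z => abs_le.2 ⟨by linarith [hχ0 z], hχ1 z⟩)
  set q := ∫ z, g z ∂ν with hq
  set c := p⁻¹ * q with hcdef
  have hqM : |q| ≤ M * p := by
    calc |q| ≤ ∫ z, |g z| ∂ν := by simpa [Real.norm_eq_abs] using norm_integral_le_integral_norm (μ := ν) g
    _ ≤ ∫ z, M * χ z ∂ν := integral_mono_ae hgI.abs (hχI.const_mul M) hgM
    _ = M * p := by rw [integral_const_mul, hχp]
  have hcM : |c| ≤ M := by
    rw [hcdef, abs_mul, abs_inv, abs_of_pos hp]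
    calc p⁻¹ * |q| ≤ p⁻¹ * (M * p) := by
          exact mul_le_mul_of_nonneg_left hqM (inv_nonneg.2 (le_of_lt hp))
    _ = M := by field_simp
  -- the centered variable V
  set V : α → ℝ := fun z => g z - c * χ z with hVdef
  have hVm : Measurable V := hg.sub (hχ.const_mul c)
  have hVbd : ∀ᵐ z ∂ν, |V z| ≤ 2 * M * χ z := by
    filter_upwards [hgM] with z hz
    calc |V z| ≤ |g z| + |c * χ z| := abs_sub _ _
    _ ≤ M * χ z + M * χ z := add_le_add hz (by
        rw [abs_mul, abs_of_nonneg (hχ0 z)]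
        exact mul_le_mul_of_nonneg_right hcM (hχ0 z))
    _ = 2 * M * χ z := by ring
  have hVbd' : ∀ᵐ z ∂ν, |V z| ≤ 2 * M := by
    filter_upwards [hVbd] with z hz
    exact hz.trans (by nlinarith [hχ1 z])
  have hV0 : ∫ z, V z ∂ν = 0 := by
    rw [hVdef]
    rw [integral_sub hgI (hχI.const_mul c), integral_const_mul, hχp, hcdef, ← hq]
    field_simp
    ring
  have hVsq : ∀ᵐ z ∂ν, V z ^ 2 ≤ 4 * M ^ 2 * χ z := by
    filter_upwards [hVbd] with z hz
    nlinarith [sq_abs (V z), abs_nonneg (V z), hχsq z, hχ0 z,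
      mul_self_le_mul_self (abs_nonneg (V z)) hz]
  have hVsqI : Integrable (fun z => V z ^ 2) ν :=
    integrable_of_bound ((hVm.pow_const 2).aestronglyMeasurable) (4 * M ^ 2) (by
      filter_upwards [hVsq] with z hz
      rw [abs_of_nonneg (sq_nonneg _)]
      exact hz.trans (by nlinarith [hχ1 z, hχ0 z]))
  have hVvar : ∫ z, V z ^ 2 ∂ν ≤ 4 * M ^ 2 * p := by
    calc ∫ z, V z ^ 2 ∂ν ≤ ∫ z, 4 * M ^ 2 * χ z ∂ν :=
          integral_mono_ae hVsqI (hχI.const_mul _) hVsq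
    _ = 4 * M ^ 2 * p := by rw [integral_const_mul, hχp]
  -- the centered count variable W
  set W : α → ℝ := fun z => χ z - p with hWdef
  have hWm : Measurable W := hχ.sub measurable_const
  have hW0 : ∫ z, W z ∂ν = 0 := by
    rw [hWdef, integral_sub hχI (integrable_const p), hχp, integral_const]
    simp
  have hWbd : ∀ z, |W z| ≤ 1 := fun z =>
    abs_le.2 ⟨by simp only [hWdef]; linarith [hχ0 z], by simp only [hWdef]; linarith [hχ1 z]⟩
  have hWvar : ∫ z, W z ^ 2 ∂ν ≤ p := by
    have hWsq : (fun z => W z ^ 2) = fun z => (1 - 2 * p) * χ z + p ^ 2 :=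
      funext fun z => by simp only [hWdef]; linear_combination hχsq z
    rw [hWsq, integral_add (hχI.const_mul _) (integrable_const _), integral_const_mul, hχp,
      integral_const]
    simp only [measureReal_def, measure_univ, ENNReal.toReal_one, smul_eq_mul, one_mul]
    nlinarith [sq_nonneg p]
  -- sums
  have hTvar : ∫ ω : Fin n → α, (∑ i, V (ω i)) ^ 2 ∂(Measure.pi fun _ => ν)
      ≤ 4 * M ^ 2 * ((n : ℝ) * p) := by
    rw [hist_sum_sq hVm hVbd' hV0]
    calc (n : ℝ) * ∫ z, V z ^ 2 ∂ν ≤ (n : ℝ) * (4 * M ^ 2 * p) :=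
          mul_le_mul_of_nonneg_left hVvar (Nat.cast_nonneg n)
    _ = 4 * M ^ 2 * ((n : ℝ) * p) := by ring
  have hKvar : ∫ ω : Fin n → α, (∑ i, W (ω i)) ^ 2 ∂(Measure.pi fun _ => ν)
      ≤ (n : ℝ) * p := by
    rw [hist_sum_sq hWm (Filter.Eventually.of_forall hWbd) hW0]
    exact mul_le_mul_of_nonneg_left hWvar (Nat.cast_nonneg n)
  have hWsum : ∀ ω : Fin n → α, ∑ i, W (ω i) = (∑ i, χ (ω i)) - (n : ℝ) * p := by
    intro ω
    simp only [hWdef, Finset.sum_sub_distrib, Finset.sum_const, Finset.card_univ,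
      Fintype.card_fin, nsmul_eq_mul]
  have hEint : ∫ ω : Fin n → α, ∏ i, (1 - χ (ω i)) ∂(Measure.pi fun _ => ν)
      = (1 - p) ^ n := by
    rw [hist_pi_prod (ν := ν) (fun _ z => 1 - χ z)]
    have : ∫ z, 1 - χ z ∂ν = 1 - p := by
      rw [integral_sub (integrable_const 1) hχI, hχp, integral_const]
      simp
    rw [this, Finset.prod_const, Finset.card_univ, Fintype.card_fin]
  have hEbound : (1 - p) ^ n ≤ 1 / ((n : ℝ) * p) := by
    have h1p : (0:ℝ) ≤ 1 - p := by linarith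
    calc (1 - p) ^ n ≤ Real.exp (-p) ^ n :=
          pow_le_pow_left₀ h1p (by linarith [Real.add_one_le_exp (-p)]) n
    _ = Real.exp (-((n : ℝ) * p)) := by
        rw [← Real.exp_nat_mul]; ring_nf
    _ ≤ 1 / ((n : ℝ) * p) := by
        rw [Real.exp_neg, one_div]
        exact inv_anti₀ hnp0 (by linarith [Real.add_one_le_exp ((n : ℝ) * p)])
  -- pointwise bound
  have hmain : ∀ᵐ ω : Fin n → α ∂(Measure.pi fun _ => ν),
      ((∑ i, g (ω i)) / (∑ i, χ (ω i)) - c) ^ 2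
        ≤ 2 / ((n:ℝ) * p) ^ 2 * (∑ i, V (ω i)) ^ 2
          + 8 * M ^ 2 / ((n:ℝ) * p) ^ 2 * ((∑ i, χ (ω i)) - (n:ℝ) * p) ^ 2
          + M ^ 2 * ∏ i, (1 - χ (ω i)) := by
    filter_upwards [hist_ae_pi hVbd] with ω hω
    set s := ∑ i, g (ω i) with hsdef
    set k := ∑ i, χ (ω i) with hkdef
    set t := ∑ i, V (ω i) with htdef
    have hts : t = s - c * k := by
      simp only [htdef, hsdef, hkdef, hVdef, Finset.sum_sub_distrib, Finset.mul_sum]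
    have hk0 : 0 ≤ k := Finset.sum_nonneg fun i _ => hχ0 _
    by_cases hkz : k = 0
    · have hz : ∑ i, χ (ω i) = 0 := by rw [← hkdef]; exact hkz
      have hall : ∀ i, χ (ω i) = 0 := fun i =>
        (Finset.sum_eq_zero_iff_of_nonneg (fun i _ => hχ0 (ω i))).1 hz i (Finset.mem_univ i)
      have hs : s = 0 := by
        rw [hsdef]; exact Finset.sum_eq_zero fun i _ => hgχ _ (hall i)
      have htz : t = 0 := by rw [hts, hs, hkz]; ring
      have hE : ∏ i, (1 - χ (ω i)) = 1 := Finset.prod_eq_one fun i _ => by rw [hall i]; ring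
      have hc2 : c ^ 2 ≤ M ^ 2 := by
        nlinarith [sq_abs c, abs_nonneg c, mul_self_le_mul_self (abs_nonneg c) hcM]
      rw [hs, hkz, htz, hE]
      have h0 : ((0:ℝ)/0 - c)^2 = c^2 := by norm_num
      rw [h0]
      have h1 : 0 ≤ 8 * M ^ 2 / ((n:ℝ)*p)^2 * ((0:ℝ) - (n:ℝ)*p) ^ 2 := by positivity
      have h2 : 0 ≤ 2 / ((n:ℝ)*p)^2 * ((0:ℝ)) ^ 2 := by positivity
      nlinarith
    · have hkpos : 0 < k := lt_of_le_of_ne hk0 (Ne.symm hkz)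
      have hE : ∏ i, (1 - χ (ω i)) = 0 := by
        obtain ⟨i, hi⟩ : ∃ i, χ (ω i) ≠ 0 := by
          by_contra hcon
          push_neg at hcon
          exact hkz (hkdef ▸ Finset.sum_eq_zero fun i _ => hcon i)
        refine Finset.prod_eq_zero (Finset.mem_univ i) ?_
        rcases hχv (ω i) with h | h
        · exact absurd h hi
        · rw [h]; ring
      have htabs : |t| ≤ 2 * M * k := by
        rw [htdef, hkdef]
        calc |∑ i, V (ω i)| ≤ ∑ i, |V (ω i)| := Finset.abs_sum_le_sum_abs _ _
        _ ≤ ∑ i, 2 * M * χ (ω i) := Finset.sum_le_sum fun i _ => hω i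
        _ = 2 * M * ∑ i, χ (ω i) := by rw [← Finset.mul_sum]
      have ht2 : t ^ 2 ≤ 4 * M ^ 2 * k ^ 2 := by
        nlinarith [sq_abs t, abs_nonneg t, mul_self_le_mul_self (abs_nonneg t) htabs]
      have hid : s / k - c = t / ((n:ℝ)*p) + t * ((n:ℝ)*p - k) / (((n:ℝ)*p) * k) := by
        have hn0 : (n:ℝ) ≠ 0 := by rintro h0; rw [h0, zero_mul] at hnp0; exact lt_irrefl _ hnp0
        rw [hts]; field_simp; ring
      have hb2 : (t * ((n:ℝ)*p - k) / (((n:ℝ)*p) * k)) ^ 2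
          ≤ 4 * M ^ 2 * (k - (n:ℝ)*p) ^ 2 / ((n:ℝ)*p) ^ 2 := by
        rw [div_pow, mul_pow, mul_pow]
        rw [div_le_div_iff₀ (by positivity) (by positivity)]
        have step := mul_le_mul_of_nonneg_right
          (mul_le_mul_of_nonneg_right ht2 (sq_nonneg ((n:ℝ)*p - k))) (sq_nonneg ((n:ℝ)*p))
        nlinarith [step]
      calc (s / k - c) ^ 2
          = (t / ((n:ℝ)*p) + t * ((n:ℝ)*p - k) / (((n:ℝ)*p) * k)) ^ 2 := by rw [hid]
      _ ≤ 2 * (t / ((n:ℝ)*p)) ^ 2 + 2 * (t * ((n:ℝ)*p - k) / (((n:ℝ)*p) * k)) ^ 2 := by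
          nlinarith [sq_nonneg (t / ((n:ℝ)*p) - t * ((n:ℝ)*p - k) / (((n:ℝ)*p) * k))]
      _ ≤ 2 * (t / ((n:ℝ)*p)) ^ 2 + 2 * (4 * M ^ 2 * (k - (n:ℝ)*p) ^ 2 / ((n:ℝ)*p) ^ 2) := by
          linarith [hb2]
      _ = 2 / ((n:ℝ)*p) ^ 2 * t ^ 2 + 8 * M ^ 2 / ((n:ℝ)*p) ^ 2 * (k - (n:ℝ)*p) ^ 2
            + M ^ 2 * ∏ i, (1 - χ (ω i)) := by
          rw [hE, mul_zero, add_zero, div_pow]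
          field_simp
          ring
  -- measurability and integrability of all pieces
  have hSm : Measurable fun ω : Fin n → α => ∑ i, g (ω i) :=
    Finset.measurable_sum _ fun i _ => hg.comp (measurable_pi_apply i)
  have hKm : Measurable fun ω : Fin n → α => ∑ i, χ (ω i) :=
    Finset.measurable_sum _ fun i _ => hχ.comp (measurable_pi_apply i)
  have hLm : Measurable fun ω : Fin n → α =>
      ((∑ i, g (ω i)) / (∑ i, χ (ω i)) - c) ^ 2 := ((hSm.div hKm).sub_const c).pow_const 2
  have hLI : Integrable (fun ω : Fin n → α =>
      ((∑ i, g (ω i)) / (∑ i, χ (ω i)) - c) ^ 2) (Measure.pi fun _ => ν) := by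
    refine integrable_of_bound hLm.aestronglyMeasurable (4 * M ^ 2) ?_
    filter_upwards [hist_ae_pi hgM] with ω hω
    have hk0 : 0 ≤ ∑ i, χ (ω i) := Finset.sum_nonneg fun i _ => hχ0 _
    have hquot : |(∑ i, g (ω i)) / (∑ i, χ (ω i))| ≤ M := by
      rcases eq_or_lt_of_le hk0 with hk | hk
      · rw [← hk, div_zero, abs_zero]; exact le_of_lt hM
      · rw [abs_div, abs_of_pos hk, div_le_iff₀ hk]
        calc |∑ i, g (ω i)| ≤ ∑ i, |g (ω i)| := Finset.abs_sum_le_sum_abs _ _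
        _ ≤ ∑ i, M * χ (ω i) := Finset.sum_le_sum fun i _ => hω i
        _ = M * ∑ i, χ (ω i) := by rw [← Finset.mul_sum]
    rw [abs_of_nonneg (sq_nonneg _)]
    have h1 : |(∑ i, g (ω i)) / (∑ i, χ (ω i)) - c| ≤ 2 * M :=
      (abs_sub _ _).trans (by linarith [hquot, hcM])
    nlinarith [sq_abs ((∑ i, g (ω i)) / (∑ i, χ (ω i)) - c),
      abs_nonneg ((∑ i, g (ω i)) / (∑ i, χ (ω i)) - c),
      mul_self_le_mul_self (abs_nonneg ((∑ i, g (ω i)) / (∑ i, χ (ω i)) - c)) h1]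
  refine ⟨hLI, ?_⟩
  have hTI : Integrable (fun ω : Fin n → α => (∑ i, V (ω i)) ^ 2) (Measure.pi fun _ => ν) := by
    refine integrable_of_bound
      ((Finset.measurable_sum _ fun i _ => hVm.comp (measurable_pi_apply i)).pow_const
        2).aestronglyMeasurable ((2 * M * n) ^ 2) ?_
    filter_upwards [hist_ae_pi hVbd'] with ω hω
    rw [abs_of_nonneg (sq_nonneg _)]
    have h1 : |∑ i, V (ω i)| ≤ 2 * M * n := by
      calc |∑ i, V (ω i)| ≤ ∑ i, |V (ω i)| := Finset.abs_sum_le_sum_abs _ _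
      _ ≤ ∑ _i : Fin n, 2 * M := Finset.sum_le_sum fun i _ => hω i
      _ = 2 * M * n := by
          rw [Finset.sum_const, Finset.card_univ, Fintype.card_fin, nsmul_eq_mul]; ring
    nlinarith [sq_abs (∑ i, V (ω i)), abs_nonneg (∑ i, V (ω i)),
      mul_self_le_mul_self (abs_nonneg (∑ i, V (ω i))) h1]
  have hKI : Integrable (fun ω : Fin n → α => ((∑ i, χ (ω i)) - (n:ℝ) * p) ^ 2)
      (Measure.pi fun _ => ν) := by
    refine integrable_of_bound ((hKm.sub_const _).pow_const 2).aestronglyMeasurable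
      (((n:ℝ) + (n:ℝ) * p) ^ 2) (Filter.Eventually.of_forall fun ω => ?_)
    rw [abs_of_nonneg (sq_nonneg _)]
    have h0 : 0 ≤ ∑ i, χ (ω i) := Finset.sum_nonneg fun i _ => hχ0 _
    have h1 : ∑ i, χ (ω i) ≤ (n:ℝ) := by
      calc ∑ i, χ (ω i) ≤ ∑ _i : Fin n, (1:ℝ) := Finset.sum_le_sum fun i _ => hχ1 _
      _ = (n:ℝ) := by simp
    have habs : |(∑ i, χ (ω i)) - (n:ℝ) * p| ≤ (n:ℝ) + (n:ℝ) * p :=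
      abs_le.2 ⟨by nlinarith, by nlinarith⟩
    nlinarith [sq_abs ((∑ i, χ (ω i)) - (n:ℝ) * p),
      abs_nonneg ((∑ i, χ (ω i)) - (n:ℝ) * p),
      mul_self_le_mul_self (abs_nonneg ((∑ i, χ (ω i)) - (n:ℝ) * p)) habs]
  have hEI : Integrable (fun ω : Fin n → α => ∏ i, (1 - χ (ω i))) (Measure.pi fun _ => ν) := by
    refine integrable_of_bound
      (Finset.measurable_prod _ fun i _ =>
        measurable_const.sub (hχ.comp (measurable_pi_apply i))).aestronglyMeasurable 1
      (Filter.Eventually.of_forall fun ω => ?_)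
    calc |∏ i, (1 - χ (ω i))| = ∏ i, |1 - χ (ω i)| := by rw [Finset.abs_prod]
    _ ≤ ∏ _i : Fin n, (1:ℝ) :=
        Finset.prod_le_prod (fun i _ => abs_nonneg _)
          (fun i _ => abs_le.2 ⟨by linarith [hχ1 (ω i)], by linarith [hχ0 (ω i)]⟩)
    _ = 1 := Finset.prod_const_one
  have hKvar' : ∫ ω : Fin n → α, ((∑ i, χ (ω i)) - (n:ℝ) * p) ^ 2 ∂(Measure.pi fun _ => ν)
      ≤ (n:ℝ) * p := by
    have heq : (fun ω : Fin n → α => ((∑ i, χ (ω i)) - (n:ℝ) * p) ^ 2)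
        = fun ω => (∑ i, W (ω i)) ^ 2 := funext fun ω => by rw [hWsum ω]
    rw [heq]; exact hKvar
  have hEle : ∫ ω : Fin n → α, ∏ i, (1 - χ (ω i)) ∂(Measure.pi fun _ => ν)
      ≤ 1 / ((n:ℝ) * p) := hEint ▸ hEbound
  calc ∫ ω : Fin n → α, ((∑ i, g (ω i)) / (∑ i, χ (ω i)) - c) ^ 2 ∂(Measure.pi fun _ => ν)
      ≤ ∫ ω : Fin n → α,
          (2 / ((n:ℝ) * p) ^ 2 * (∑ i, V (ω i)) ^ 2
            + 8 * M ^ 2 / ((n:ℝ) * p) ^ 2 * ((∑ i, χ (ω i)) - (n:ℝ) * p) ^ 2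
            + M ^ 2 * ∏ i, (1 - χ (ω i))) ∂(Measure.pi fun _ => ν) :=
        integral_mono_ae hLI (((hTI.const_mul _).add (hKI.const_mul _)).add (hEI.const_mul _))
          hmain
  _ = 2 / ((n:ℝ) * p) ^ 2 * (∫ ω : Fin n → α, (∑ i, V (ω i)) ^ 2 ∂(Measure.pi fun _ => ν))
        + 8 * M ^ 2 / ((n:ℝ) * p) ^ 2
          * (∫ ω : Fin n → α, ((∑ i, χ (ω i)) - (n:ℝ) * p) ^ 2 ∂(Measure.pi fun _ => ν))
        + M ^ 2 * ∫ ω : Fin n → α, ∏ i, (1 - χ (ω i)) ∂(Measure.pi fun _ => ν) := by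
      have I1 : Integrable (fun ω : Fin n → α =>
          2 / ((n:ℝ) * p) ^ 2 * (∑ i, V (ω i)) ^ 2
            + 8 * M ^ 2 / ((n:ℝ) * p) ^ 2 * ((∑ i, χ (ω i)) - (n:ℝ) * p) ^ 2)
          (Measure.pi fun _ => ν) := (hTI.const_mul _).add (hKI.const_mul _)
      have I2 : Integrable (fun ω : Fin n → α => M ^ 2 * ∏ i, (1 - χ (ω i)))
          (Measure.pi fun _ => ν) := hEI.const_mul _
      have I3 : Integrable (fun ω : Fin n → α => 2 / ((n:ℝ) * p) ^ 2 * (∑ i, V (ω i)) ^ 2)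
          (Measure.pi fun _ => ν) := hTI.const_mul _
      have I4 : Integrable (fun ω : Fin n → α =>
          8 * M ^ 2 / ((n:ℝ) * p) ^ 2 * ((∑ i, χ (ω i)) - (n:ℝ) * p) ^ 2)
          (Measure.pi fun _ => ν) := hKI.const_mul _
      rw [integral_add I1 I2, integral_add I3 I4,
        integral_const_mul, integral_const_mul, integral_const_mul]
  _ ≤ 2 / ((n:ℝ) * p) ^ 2 * (4 * M ^ 2 * ((n:ℝ) * p))
        + 8 * M ^ 2 / ((n:ℝ) * p) ^ 2 * ((n:ℝ) * p)
        + M ^ 2 * (1 / ((n:ℝ) * p)) := by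
      gcongr
  _ = 17 * M ^ 2 / ((n:ℝ) * p) := by
      field_simp
      ring
lemma hist_inner {α : Type*} [MeasurableSpace α] (μ : Measure α) [IsFiniteMeasure μ]
    {N : ℕ} (A : Fin N → Set α) (hmeasA : ∀ j, MeasurableSet (A j))
    (hdisj : Pairwise fun i j => Disjoint (A i) (A j))
    (S : Set α) (hS : ∀ j, A j ⊆ S)
    (u v : Fin N → ℝ) (m : ℝ) (hm : 0 ≤ m) (hAm : ∀ j, μ (A j) = ENNReal.ofReal m) :
    ∫ x in S, ((∑ j, u j * (A j).indicator 1 x) - ∑ j, v j * (A j).indicator 1 x) ^ 2 ∂μ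
      = ∑ j, (u j - v j) ^ 2 * m := by
  have step : ∀ x, ((∑ j, u j * (A j).indicator 1 x) - ∑ j, v j * (A j).indicator 1 x) ^ 2
      = ∑ j, (u j - v j) ^ 2 * (A j).indicator 1 x := by
    intro x
    rw [← Finset.sum_sub_distrib]
    have hsum : ∀ j, u j * (A j).indicator 1 x - v j * (A j).indicator 1 x
        = (u j - v j) * (A j).indicator 1 x := fun j => by ring
    simp_rw [hsum]
    by_cases hx : ∃ j0, x ∈ A j0
    · obtain ⟨j0, hj0⟩ := hx
      have hnot : ∀ j, j ≠ j0 → x ∉ A j := fun j hj hxj => Set.disjoint_left.1 (hdisj hj) hxj hj0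
      rw [Finset.sum_eq_single j0 (fun j _ hj => by rw [Set.indicator_of_notMem (hnot j hj)]; ring)
          (fun hmem => absurd (Finset.mem_univ j0) hmem),
        Finset.sum_eq_single j0 (fun j _ hj => by rw [Set.indicator_of_notMem (hnot j hj)]; ring)
          (fun hmem => absurd (Finset.mem_univ j0) hmem),
        Set.indicator_of_mem hj0, Pi.one_apply]
      ring
    · push_neg at hx
      rw [Finset.sum_eq_zero fun j _ => by rw [Set.indicator_of_notMem (hx j)]; ring,
        Finset.sum_eq_zero fun j _ => by rw [Set.indicator_of_notMem (hx j)]; ring]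
      norm_num
  rw [integral_congr_ae (Filter.Eventually.of_forall step)]
  rw [integral_finset_sum]
  · refine Finset.sum_congr rfl fun j _ => ?_
    have heq : (fun x => (u j - v j) ^ 2 * (A j).indicator 1 x)
        = (A j).indicator fun _ => (u j - v j) ^ 2 := funext fun x => by
      by_cases hx : x ∈ A j <;> simp [hx]
    rw [heq, integral_indicator_const _ (hmeasA j), measureReal_def, Measure.restrict_apply (hmeasA j),
      Set.inter_eq_self_of_subset_left (hS j), hAm j, ENNReal.toReal_ofReal hm, smul_eq_mul]
    ring
  · intro j _
    have heq : (fun x => (u j - v j) ^ 2 * (A j).indicator 1 x)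
        = (A j).indicator fun _ => (u j - v j) ^ 2 := funext fun x => by
      by_cases hx : x ∈ A j <;> simp [hx]
    rw [heq]
    exact (integrable_const _).indicator (hmeasA j)
set_option maxHeartbeats 1000000 in
/-- Sample-error upper bound for a single histogram regressor: for a histogram
partition `A_1, …, A_N` of `[0,1]^d` with `N = h^{-d}` cells each of
`ν_X`-measure `h^d`, bounded responses `|y| ≤ M`, and `n h^d ≥ 1`, the expected
squared `L²(ν_X)` distance between the empirical histogram regressor and the
population histogram regressor is at most `18 M² / (n h^d)`. -/
theorem stmt_12 (d n N : ℕ) (hd : 1 ≤ d) (hn : 1 ≤ n) (hN : 1 ≤ N)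
    (M h : ℝ) (hM : 0 < M) (hh : h ∈ Set.Ioc (0 : ℝ) 1)
    (hNh : (N : ℝ) = (h ^ d)⁻¹)
    (A : Fin N → Set (Fin d → ℝ)) (hmeas : ∀ j, MeasurableSet (A j))
    (hdisj : Pairwise fun i j => Disjoint (A i) (A j))
    (hcover : (⋃ j, A j) = Set.Icc (0 : Fin d → ℝ) 1)
    (ν : Measure ((Fin d → ℝ) × ℝ)) [IsProbabilityMeasure ν]
    (hsupp : ∀ᵐ z ∂ν, z.1 ∈ Set.Icc (0 : Fin d → ℝ) 1 ∧ |z.2| ≤ M)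
    (hAj : ∀ j, ν.map Prod.fst (A j) = ENNReal.ofReal (h ^ d))
    (hnh : 1 ≤ (n : ℝ) * h ^ d) :
    (∫ ω : Fin n → (Fin d → ℝ) × ℝ,
        (∫ x in Set.Icc (0 : Fin d → ℝ) 1,
            ((∑ j, ((∑ i, (A j).indicator (fun _ => (ω i).2) (ω i).1)
                      / (∑ i, (A j).indicator (fun _ => (1 : ℝ)) (ω i).1))
                     * (A j).indicator 1 x)
              - ∑ j, ((h ^ d)⁻¹ * ∫ z, (A j).indicator (fun _ => z.2) z.1 ∂ν)
                     * (A j).indicator 1 x) ^ 2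
          ∂(ν.map Prod.fst))
      ∂(Measure.pi fun _ : Fin n => ν))
    ≤ 18 * M ^ 2 / ((n : ℝ) * h ^ d) := by
  classical
  have hh0 : 0 < h := hh.1
  have hp : (0:ℝ) < h ^ d := by positivity
  have hp' : h ^ d ≠ 0 := ne_of_gt hp
  have hnp0 : (0:ℝ) < (n:ℝ) * h ^ d := lt_of_lt_of_le one_pos hnh
  haveI : IsProbabilityMeasure (ν.map Prod.fst) :=
    Measure.isProbabilityMeasure_map measurable_fst.aemeasurable
  have hp1 : h ^ d ≤ 1 := pow_le_one₀ (le_of_lt hh0) hh.2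
  have hsub : ∀ j, A j ⊆ Set.Icc (0 : Fin d → ℝ) 1 := fun j => hcover ▸ Set.subset_iUnion A j
  have hgm : ∀ j, Measurable fun z : (Fin d → ℝ) × ℝ => (A j).indicator (fun _ => z.2) z.1 := by
    intro j
    have heq : (fun z : (Fin d → ℝ) × ℝ => (A j).indicator (fun _ => z.2) z.1)
        = fun z => if z.1 ∈ A j then z.2 else 0 := funext fun z => by
      by_cases hz : z.1 ∈ A j <;> simp [hz]
    rw [heq]
    exact Measurable.ite (measurable_fst (hmeas j)) measurable_snd measurable_const
  have hχm : ∀ j, Measurable fun z : (Fin d → ℝ) × ℝ =>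
      (A j).indicator (fun _ => (1:ℝ)) z.1 := by
    intro j
    have heq : (fun z : (Fin d → ℝ) × ℝ => (A j).indicator (fun _ => (1:ℝ)) z.1)
        = fun z => if z.1 ∈ A j then (1:ℝ) else 0 := funext fun z => by
      by_cases hz : z.1 ∈ A j <;> simp [hz]
    rw [heq]
    exact Measurable.ite (measurable_fst (hmeas j)) measurable_const measurable_const
  have hχv : ∀ j (z : (Fin d → ℝ) × ℝ), (A j).indicator (fun _ => (1:ℝ)) z.1 = 0
      ∨ (A j).indicator (fun _ => (1:ℝ)) z.1 = 1 := fun j z => by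
    by_cases hz : z.1 ∈ A j <;> simp [hz]
  have hgχ : ∀ j (z : (Fin d → ℝ) × ℝ), (A j).indicator (fun _ => (1:ℝ)) z.1 = 0
      → (A j).indicator (fun _ => z.2) z.1 = 0 := fun j z hz => by
    by_cases hz1 : z.1 ∈ A j
    · simp [hz1] at hz
    · simp [hz1]
  have hgM : ∀ j, ∀ᵐ z ∂ν, |(A j).indicator (fun _ => z.2) z.1|
      ≤ M * (A j).indicator (fun _ => (1:ℝ)) z.1 := by
    intro j
    filter_upwards [hsupp] with z hz
    by_cases hz1 : z.1 ∈ A j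
    · simpa [hz1] using hz.2
    · simp [hz1]
  have hχint : ∀ j, ∫ z, (A j).indicator (fun _ => (1:ℝ)) z.1 ∂ν = h ^ d := by
    intro j
    have heq : (fun z : (Fin d → ℝ) × ℝ => (A j).indicator (fun _ => (1:ℝ)) z.1)
        = (Prod.fst ⁻¹' A j).indicator fun _ => (1:ℝ) := funext fun z => by
      by_cases hz : z.1 ∈ A j <;> simp [hz, Set.indicator_apply, Set.mem_preimage]
    rw [heq, integral_indicator_const _ (measurable_fst (hmeas j)),
      measureReal_def, ← Measure.map_apply measurable_fst (hmeas j), hAj j,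
      ENNReal.toReal_ofReal (le_of_lt hp), smul_eq_mul, mul_one]
  have hcell : ∀ j : Fin N,
      Integrable (fun ω : Fin n → (Fin d → ℝ) × ℝ =>
        ((∑ i, (A j).indicator (fun _ => (ω i).2) (ω i).1)
            / (∑ i, (A j).indicator (fun _ => (1:ℝ)) (ω i).1)
          - (h ^ d)⁻¹ * ∫ z, (A j).indicator (fun _ => z.2) z.1 ∂ν) ^ 2)
        (Measure.pi fun _ => ν) ∧
      ∫ ω : Fin n → (Fin d → ℝ) × ℝ,
        ((∑ i, (A j).indicator (fun _ => (ω i).2) (ω i).1)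
            / (∑ i, (A j).indicator (fun _ => (1:ℝ)) (ω i).1)
          - (h ^ d)⁻¹ * ∫ z, (A j).indicator (fun _ => z.2) z.1 ∂ν) ^ 2
        ∂(Measure.pi fun _ => ν)
        ≤ 17 * M ^ 2 / ((n:ℝ) * h ^ d) :=
    fun j => hist_cell_core ν _ _ (hgm j) (hχm j) (hχv j) (hgχ j) M (h ^ d) hM hp hp1
      (hgM j) (hχint j) n hnh
  have hinner : ∀ ω : Fin n → (Fin d → ℝ) × ℝ,
      (∫ x in Set.Icc (0 : Fin d → ℝ) 1,
          ((∑ j, ((∑ i, (A j).indicator (fun _ => (ω i).2) (ω i).1)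
                    / (∑ i, (A j).indicator (fun _ => (1 : ℝ)) (ω i).1))
                   * (A j).indicator 1 x)
            - ∑ j, ((h ^ d)⁻¹ * ∫ z, (A j).indicator (fun _ => z.2) z.1 ∂ν)
                   * (A j).indicator 1 x) ^ 2
        ∂(ν.map Prod.fst))
      = ∑ j, ((∑ i, (A j).indicator (fun _ => (ω i).2) (ω i).1)
            / (∑ i, (A j).indicator (fun _ => (1:ℝ)) (ω i).1)
          - (h ^ d)⁻¹ * ∫ z, (A j).indicator (fun _ => z.2) z.1 ∂ν) ^ 2 * h ^ d :=
    fun ω => hist_inner (ν.map Prod.fst) A hmeas hdisj _ hsub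
      (fun j => (∑ i, (A j).indicator (fun _ => (ω i).2) (ω i).1)
          / (∑ i, (A j).indicator (fun _ => (1:ℝ)) (ω i).1))
      (fun j => (h ^ d)⁻¹ * ∫ z, (A j).indicator (fun _ => z.2) z.1 ∂ν)
      (h ^ d) (le_of_lt hp) hAj
  calc (∫ ω : Fin n → (Fin d → ℝ) × ℝ,
        (∫ x in Set.Icc (0 : Fin d → ℝ) 1,
            ((∑ j, ((∑ i, (A j).indicator (fun _ => (ω i).2) (ω i).1)
                      / (∑ i, (A j).indicator (fun _ => (1 : ℝ)) (ω i).1))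
                     * (A j).indicator 1 x)
              - ∑ j, ((h ^ d)⁻¹ * ∫ z, (A j).indicator (fun _ => z.2) z.1 ∂ν)
                     * (A j).indicator 1 x) ^ 2
          ∂(ν.map Prod.fst))
      ∂(Measure.pi fun _ : Fin n => ν))
      = ∫ ω : Fin n → (Fin d → ℝ) × ℝ,
          (∑ j, ((∑ i, (A j).indicator (fun _ => (ω i).2) (ω i).1)
              / (∑ i, (A j).indicator (fun _ => (1:ℝ)) (ω i).1)
            - (h ^ d)⁻¹ * ∫ z, (A j).indicator (fun _ => z.2) z.1 ∂ν) ^ 2 * h ^ d)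
          ∂(Measure.pi fun _ : Fin n => ν) :=
        integral_congr_ae (Filter.Eventually.of_forall hinner)
  _ = ∑ j, ∫ ω : Fin n → (Fin d → ℝ) × ℝ,
          ((∑ i, (A j).indicator (fun _ => (ω i).2) (ω i).1)
              / (∑ i, (A j).indicator (fun _ => (1:ℝ)) (ω i).1)
            - (h ^ d)⁻¹ * ∫ z, (A j).indicator (fun _ => z.2) z.1 ∂ν) ^ 2 * h ^ d
          ∂(Measure.pi fun _ : Fin n => ν) :=
        integral_finset_sum _ fun j _ => (hcell j).1.mul_const _
  _ = ∑ j, (∫ ω : Fin n → (Fin d → ℝ) × ℝ,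
          ((∑ i, (A j).indicator (fun _ => (ω i).2) (ω i).1)
              / (∑ i, (A j).indicator (fun _ => (1:ℝ)) (ω i).1)
            - (h ^ d)⁻¹ * ∫ z, (A j).indicator (fun _ => z.2) z.1 ∂ν) ^ 2
          ∂(Measure.pi fun _ : Fin n => ν)) * h ^ d :=
        Finset.sum_congr rfl fun j _ => integral_mul_const _ _
  _ ≤ ∑ _j : Fin N, (17 * M ^ 2 / ((n:ℝ) * h ^ d)) * h ^ d :=
        Finset.sum_le_sum fun j _ => mul_le_mul_of_nonneg_right (hcell j).2 (le_of_lt hp)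
  _ = (N : ℝ) * ((17 * M ^ 2 / ((n:ℝ) * h ^ d)) * h ^ d) := by
        rw [Finset.sum_const, Finset.card_univ, Fintype.card_fin, nsmul_eq_mul]
  _ = 17 * M ^ 2 / ((n:ℝ) * h ^ d) := by
        rw [hNh]
        field_simp
  _ ≤ 18 * M ^ 2 / ((n:ℝ) * h ^ d) := by
        gcongr
        norm_num
end

section
/- Sample-error (variance) lower bound for a single histogram regressor: let d ≥ 1 and n ≥ 1 be integers, M > 0, and h ∈ (0,1] be such that N := h^{−d} is a positive integer. Let A_1, …, A_N be pairwise disjoint Borel subsets of ℝ^d whose union is [0,1]^d. Let ν_X be a probability measure on ℝ^d with ν_X([0,1]^d) = 1 and ν_X(A_j) = h^d for every j, let μ be a probability measure on ℝ with ∫ e dμ(e) = 0 and ∫ e² dμ(e) = σ² < ∞, and let f : ℝ^d → ℝ be Borel measurable with |f| ≤ M. Consider samples ((x_1,e_1),…,(x_n,e_n)) drawn from the n-fold product (ν_X ⊗ μ)^{⊗n} and set y_i := f(x_i) + e_i (the regression model Y = f(X) + ε with noise independent of X). Define the population histogram regressor f*_π := Σ_{j=1}^N ( h^{−d} ∫_{A_j}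 f dν_X ) 1_{A_j}, and let f_ω := Σ_{j=1}^N c_j(ω) 1_{A_j} be the empirical histogram regressor built from ((x_i,y_i))_{i=1}^n, where c_j(ω) := ( Σ_{i=1}^n y_i 1_{A_j}(x_i) ) / ( Σ_{i=1}^n 1_{A_j}(x_i) ) if Σ_{i=1}^n 1_{A_j}(x_i) > 0 and c_j(ω) := 0 otherwise. If n h^d ≥ 1, then ∫_{((ℝ^d×ℝ)^n)} ∫_{[0,1]^d} ( f_ω(x) − f*_π(x) )² dν_X(x) d(ν_X ⊗ μ)^{⊗n} ≥ σ² / ( 8 n h^d ). -/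
set_option linter.unusedSectionVars false
set_option linter.unusedVariables false
open MeasureTheory

theorem my_integral_pi_prod {E : Type*} [MeasurableSpace E] (ν : Measure E) [SigmaFinite ν]
    {ι : Type*} [Fintype ι] (g : ι → E → ℝ) :
    ∫ x : ι → E, ∏ i, g i (x i) ∂(Measure.pi fun _ : ι => ν) = ∏ i, ∫ x, g i x ∂ν := by
  letI : MeasureSpace E := ⟨ν⟩
  exact MeasureTheory.integral_fintype_prod_eq_prod g (μ := fun _ => ν)

theorem my_integrable_pi_prod {E : Type*} [MeasurableSpace E] (ν : Measure E) [SigmaFinite ν]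
    {ι : Type*} [Fintype ι] {g : ι → E → ℝ} (hg : ∀ i, Integrable (g i) ν) :
    Integrable (fun x : ι → E => ∏ i, g i (x i)) (Measure.pi fun _ : ι => ν) := by
  letI : MeasureSpace E := ⟨ν⟩
  exact MeasureTheory.Integrable.fintype_prod hg

section evalLemmas
variable {E : Type*} [MeasurableSpace E] (ν : Measure E) [IsProbabilityMeasure ν]
    {ι : Type*} [Fintype ι] [DecidableEq ι]

theorem my_eval_eq_prod (g : E → ℝ) (i : ι) (x : ι → E) :
    g (x i) = ∏ m, (fun a => if m = i then g a else 1) (x m) := by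
  rw [Finset.prod_eq_single i (fun m _ hm => by simp [hm]) (by simp)]
  simp

theorem my_integral_pi_eval (g : E → ℝ) (i : ι) :
    ∫ x : ι → E, g (x i) ∂(Measure.pi fun _ : ι => ν) = ∫ a, g a ∂ν := by
  simp_rw [my_eval_eq_prod g i]
  refine Eq.trans (my_integral_pi_prod ν (fun m a => if m = i then g a else 1)) ?_
  rw [Finset.prod_eq_single i (fun m _ hm => by simp [hm]) (by simp)]
  simp

theorem my_integrable_pi_eval {g : E → ℝ} (hg : Integrable g ν) (i : ι) :
    Integrable (fun x : ι → E => g (x i)) (Measure.pi fun _ : ι => ν) := by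
  simp_rw [my_eval_eq_prod g i]
  exact my_integrable_pi_prod ν (g := fun m a => if m = i then g a else 1)
    (fun m => by by_cases hm : m = i <;> simp [hm, hg, integrable_const])

theorem my_integral_pi_eval₂ {g g' : E → ℝ} (i k : ι) (hik : i ≠ k) :
    ∫ x : ι → E, g (x i) * g' (x k) ∂(Measure.pi fun _ : ι => ν)
      = (∫ a, g a ∂ν) * ∫ a, g' a ∂ν := by
  have key : ∀ x : ι → E, g (x i) * g' (x k)
      = ∏ m, (fun a => if m = i then g a else if m = k then g' a else 1) (x m) := by
    intro x
    rw [← Finset.prod_erase_mul _ _ (Finset.mem_univ k),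
      ← Finset.prod_erase_mul _ _ (Finset.mem_erase.2 ⟨hik, Finset.mem_univ i⟩)]
    rw [Finset.prod_eq_one (fun m hm => ?_)]
    · simp [hik, Ne.symm hik, mul_comm]
    · simp only [Finset.mem_erase] at hm
      simp [hm.1, hm.2.1]
  simp_rw [key]
  refine Eq.trans (my_integral_pi_prod ν
    (fun m a => if m = i then g a else if m = k then g' a else 1)) ?_
  rw [← Finset.prod_erase_mul _ _ (Finset.mem_univ k),
    ← Finset.prod_erase_mul _ _ (Finset.mem_erase.2 ⟨hik, Finset.mem_univ i⟩)]
  rw [Finset.prod_eq_one (fun m hm => ?_)]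
  · simp [hik, Ne.symm hik, mul_comm]
  · simp only [Finset.mem_erase] at hm
    simp [hm.1, hm.2.1]

theorem my_integrable_pi_eval₂ {g g' : E → ℝ} (hg : Integrable g ν) (hg' : Integrable g' ν)
    (i k : ι) (hik : i ≠ k) :
    Integrable (fun x : ι → E => g (x i) * g' (x k)) (Measure.pi fun _ : ι => ν) := by
  have key : ∀ x : ι → E, g (x i) * g' (x k)
      = ∏ m, (fun a => if m = i then g a else if m = k then g' a else 1) (x m) := by
    intro x
    rw [← Finset.prod_erase_mul _ _ (Finset.mem_univ k),
      ← Finset.prod_erase_mul _ _ (Finset.mem_erase.2 ⟨hik, Finset.mem_univ i⟩)]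
    rw [Finset.prod_eq_one (fun m hm => ?_)]
    · simp [hik, Ne.symm hik, mul_comm]
    · simp only [Finset.mem_erase] at hm
      simp [hm.1, hm.2.1]
  simp_rw [key]
  refine my_integrable_pi_prod ν
    (g := fun m a => if m = i then g a else if m = k then g' a else 1) (fun m => ?_)
  by_cases h1 : m = i
  · simp [h1, hik, hg]
  · by_cases h2 : m = k <;> simp [h1, h2, hg', integrable_const, Ne.symm hik]
end evalLemmas

theorem my_sq_sum_indicator {α : Type*} {N : ℕ} (A : Fin N → Set α)
    (hdisj : Pairwise fun i j => Disjoint (A i) (A j)) (r : Fin N → ℝ) (x : α) :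
    (∑ j, r j * (A j).indicator 1 x) ^ 2 = ∑ j, (r j) ^ 2 * (A j).indicator 1 x := by
  by_cases hx : ∃ j0, x ∈ A j0
  · obtain ⟨j0, hj0⟩ := hx
    have hz : ∀ j, j ≠ j0 → (A j).indicator (1 : α → ℝ) x = 0 := by
      intro j hj
      have : x ∉ A j := fun hxj => (Set.disjoint_left.1 (hdisj hj)) hxj hj0
      simp [Set.indicator_of_notMem this]
    rw [Finset.sum_eq_single j0 (fun j _ hj => by rw [hz j hj, mul_zero])
        (fun hmem => absurd (Finset.mem_univ j0) hmem),
      Finset.sum_eq_single j0 (fun j _ hj => by rw [hz j hj, mul_zero])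
        (fun hmem => absurd (Finset.mem_univ j0) hmem)]
    simp [Set.indicator_of_mem hj0, mul_pow]
  · push_neg at hx
    have : ∀ j : Fin N, (A j).indicator (1 : α → ℝ) x = 0 := fun j => by
      simp [Set.indicator_of_notMem (hx j)]
    simp [this]

theorem my_inner_integral {d N : ℕ} {p : ℝ} (hp : 0 < p) (A : Fin N → Set (Fin d → ℝ))
    (hmeas : ∀ j, MeasurableSet (A j))
    (hdisj : Pairwise fun i j => Disjoint (A i) (A j))
    (hcover : (⋃ j, A j) = Set.Icc (0 : Fin d → ℝ) 1)
    (νX : Measure (Fin d → ℝ)) [IsProbabilityMeasure νX]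
    (hAj : ∀ j, νX (A j) = ENNReal.ofReal p) (r : Fin N → ℝ) :
    ∫ x in Set.Icc (0 : Fin d → ℝ) 1, (∑ j, r j * (A j).indicator 1 x) ^ 2 ∂νX
      = ∑ j, (r j) ^ 2 * p := by
  have hsub : ∀ j, A j ⊆ Set.Icc (0 : Fin d → ℝ) 1 := fun j =>
    hcover ▸ Set.subset_iUnion A j
  have hrw : ∀ x, (∑ j, r j * (A j).indicator 1 x) ^ 2
      = ∑ j, (A j).indicator (fun _ => (r j) ^ 2) x := by
    intro x
    rw [my_sq_sum_indicator A hdisj r x]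
    refine Finset.sum_congr rfl fun j _ => ?_
    by_cases hxj : x ∈ A j <;>
      simp [Set.indicator_of_mem, Set.indicator_of_notMem, hxj]
  simp_rw [hrw]
  rw [integral_finset_sum _ (fun j _ =>
    (integrable_const ((r j) ^ 2)).indicator (hmeas j))]
  refine Finset.sum_congr rfl fun j _ => ?_
  rw [integral_indicator_const _ (hmeas j), measureReal_def, Measure.restrict_apply (hmeas j),
    Set.inter_eq_self_of_subset_left (hsub j), hAj j,
    ENNReal.toReal_ofReal hp.le, smul_eq_mul, mul_comm]

section cell
variable {α : Type*} [MeasurableSpace α] {n : ℕ}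

/-- indicator of a cell as a real function -/
noncomputable def myInd (B : Set α) : α → ℝ := B.indicator 1

noncomputable def myS (B : Set α) (x : Fin n → α) : ℝ := ∑ i, myInd B (x i)

noncomputable def myT (B : Set α) (x : Fin n → α) (e : Fin n → ℝ) : ℝ := ∑ i, e i * myInd B (x i)

noncomputable def myF (f : α → ℝ) (B : Set α) (x : Fin n → α) : ℝ := ∑ i, f (x i) * myInd B (x i)

variable {B : Set α}

lemma myInd_nonneg (y : α) : 0 ≤ myInd B y := by
  by_cases hy : y ∈ B <;> simp [myInd, Set.indicator_of_mem, Set.indicator_of_notMem, hy]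

lemma myInd_01 (y : α) : myInd B y = 0 ∨ myInd B y = 1 := by
  by_cases hy : y ∈ B
  · right; simp [myInd, Set.indicator_of_mem, hy]
  · left; simp [myInd, Set.indicator_of_notMem, hy]

lemma myInd_le_one (y : α) : myInd B y ≤ 1 := by
  rcases myInd_01 (B := B) y with h | h <;> simp [h]

lemma myInd_sq (y : α) : myInd B y * myInd B y = myInd B y := by
  rcases myInd_01 (B := B) y with h | h <;> simp [h]

lemma myInd_meas (hB : MeasurableSet B) : Measurable (myInd B) :=
  measurable_const.indicator hB

lemma myS_nonneg (x : Fin n → α) : 0 ≤ myS B x :=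
  Finset.sum_nonneg fun i _ => myInd_nonneg _

lemma myS_zero_ind {x : Fin n → α} (hx : myS B x = 0) : ∀ i, myInd B (x i) = 0 := by
  intro i
  have := (Finset.sum_eq_zero_iff_of_nonneg (fun i _ => myInd_nonneg (B := B) (x i))).1 hx
  exact this i (Finset.mem_univ i)

lemma myS_cases (x : Fin n → α) : myS B x = 0 ∨ 1 ≤ myS B x := by
  by_cases h : ∀ i, myInd B (x i) = 0
  · left; simp [myS, h]
  · right
    push_neg at h
    obtain ⟨i, hi⟩ := h
    have h1 : myInd B (x i) = 1 := (myInd_01 (x i)).resolve_left hi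
    calc (1 : ℝ) = myInd B (x i) := h1.symm
      _ ≤ myS B x := Finset.single_le_sum (fun i _ => myInd_nonneg (x i)) (Finset.mem_univ i)

lemma myS_meas (hB : MeasurableSet B) : Measurable (myS B (n := n)) :=
  Finset.measurable_sum _ fun i _ => (myInd_meas hB).comp (measurable_pi_apply i)

lemma myF_bound {f : α → ℝ} {M : ℝ} (hfb : ∀ y, |f y| ≤ M) (x : Fin n → α) :
    |myF f B x| ≤ M * myS B x := by
  calc |myF f B x| ≤ ∑ i, |f (x i) * myInd B (x i)| := Finset.abs_sum_le_sum_abs _ _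
    _ ≤ ∑ i, M * myInd B (x i) := by
        refine Finset.sum_le_sum fun i _ => ?_
        rw [abs_mul, abs_of_nonneg (myInd_nonneg _)]
        exact mul_le_mul_of_nonneg_right (hfb _) (myInd_nonneg _)
    _ = M * myS B x := by rw [myS, Finset.mul_sum]

lemma myT_abs_le (x : Fin n → α) (e : Fin n → ℝ) : |myT B x e| ≤ ∑ i, |e i| := by
  calc |myT B x e| ≤ ∑ i, |e i * myInd B (x i)| := Finset.abs_sum_le_sum_abs _ _
    _ ≤ ∑ i, |e i| := by
        refine Finset.sum_le_sum fun i _ => ?_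
        rw [abs_mul, abs_of_nonneg (myInd_nonneg _)]
        nlinarith [myInd_le_one (B := B) (x i), abs_nonneg (e i), myInd_nonneg (B := B) (x i)]

end cell

section cell2
variable {α : Type*} [MeasurableSpace α] {n : ℕ} {B : Set α}
  (μ : Measure ℝ) [IsProbabilityMeasure μ] {σ : ℝ}

lemma myT_integrable (hint1 : Integrable (fun e : ℝ => e) μ) (x : Fin n → α) :
    Integrable (fun e : Fin n → ℝ => myT B x e) (Measure.pi fun _ : Fin n => μ) :=
  integrable_finset_sum _ fun i _ => (my_integrable_pi_eval μ hint1 i).mul_const _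

lemma myT_mean (hint1 : Integrable (fun e : ℝ => e) μ) (hmean : ∫ e, e ∂μ = 0)
    (x : Fin n → α) : ∫ e, myT B x e ∂(Measure.pi fun _ : Fin n => μ) = 0 := by
  rw [show (fun e : Fin n → ℝ => myT B x e) = fun e => ∑ i, e i * myInd B (x i) from rfl,
    integral_finset_sum _ fun i _ => (my_integrable_pi_eval μ hint1 i).mul_const _]
  refine Finset.sum_eq_zero fun i _ => ?_
  rw [integral_mul_const, my_integral_pi_eval μ (fun a => a) i, hmean, zero_mul]

lemma myT_sq_eq (x : Fin n → α) : (fun e : Fin n → ℝ => (myT B x e) ^ 2)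
    = fun e => ∑ i, ∑ k, (myInd B (x i) * myInd B (x k)) * (e i * e k) := by
  funext e
  rw [myT, sq, Finset.sum_mul_sum]
  exact Finset.sum_congr rfl fun i _ => Finset.sum_congr rfl fun k _ => by ring

lemma myT_sq_term_integrable (hint1 : Integrable (fun e : ℝ => e) μ)
    (hint2 : Integrable (fun e : ℝ => e ^ 2) μ) (x : Fin n → α) (i k : Fin n) :
    Integrable (fun e : Fin n → ℝ => (myInd B (x i) * myInd B (x k)) * (e i * e k))
      (Measure.pi fun _ : Fin n => μ) := by
  by_cases hik : i = k
  · subst hik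
    have h2 : Integrable (fun e : Fin n → ℝ => (e i) ^ 2) (Measure.pi fun _ : Fin n => μ) :=
      my_integrable_pi_eval μ hint2 i
    have := h2.const_mul (myInd B (x i) * myInd B (x i))
    refine this.congr (ae_of_all _ fun e => by ring)
  · exact (my_integrable_pi_eval₂ μ hint1 hint1 i k hik).const_mul _

lemma myT_sq_integrable (hint1 : Integrable (fun e : ℝ => e) μ)
    (hint2 : Integrable (fun e : ℝ => e ^ 2) μ) (x : Fin n → α) :
    Integrable (fun e : Fin n → ℝ => (myT B x e) ^ 2) (Measure.pi fun _ : Fin n => μ) := by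
  rw [myT_sq_eq]
  exact integrable_finset_sum _ fun i _ => integrable_finset_sum _ fun k _ =>
    myT_sq_term_integrable μ hint1 hint2 x i k

lemma myT_sq_integral (hint1 : Integrable (fun e : ℝ => e) μ)
    (hint2 : Integrable (fun e : ℝ => e ^ 2) μ)
    (hmean : ∫ e, e ∂μ = 0) (hvar : ∫ e, e ^ 2 ∂μ = σ ^ 2) (x : Fin n → α) :
    ∫ e, (myT B x e) ^ 2 ∂(Measure.pi fun _ : Fin n => μ) = σ ^ 2 * myS B x := by
  rw [myT_sq_eq, integral_finset_sum _ fun i _ => integrable_finset_sum _ fun k _ =>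
    myT_sq_term_integrable μ hint1 hint2 x i k]
  have hterm : ∀ i k : Fin n, ∫ e : Fin n → ℝ,
      (myInd B (x i) * myInd B (x k)) * (e i * e k) ∂(Measure.pi fun _ : Fin n => μ)
      = (myInd B (x i) * myInd B (x k)) * ∫ e : Fin n → ℝ, e i * e k
          ∂(Measure.pi fun _ : Fin n => μ) := fun i k => integral_const_mul _ _
  calc ∑ i, ∫ e : Fin n → ℝ, (∑ k, (myInd B (x i) * myInd B (x k)) * (e i * e k))
          ∂(Measure.pi fun _ : Fin n => μ)
      = ∑ i, ∑ k, ∫ e : Fin n → ℝ, (myInd B (x i) * myInd B (x k)) * (e i * e k)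
          ∂(Measure.pi fun _ : Fin n => μ) := by
        refine Finset.sum_congr rfl fun i _ => ?_
        exact integral_finset_sum _ fun k _ => myT_sq_term_integrable μ hint1 hint2 x i k
    _ = ∑ i, myInd B (x i) * σ ^ 2 := by
        refine Finset.sum_congr rfl fun i _ => ?_
        rw [Finset.sum_eq_single i (fun k _ hk => ?_) (fun h => absurd (Finset.mem_univ i) h)]
        · rw [hterm i i]
          have : ∫ e : Fin n → ℝ, e i * e i ∂(Measure.pi fun _ : Fin n => μ) = σ ^ 2 := by
            rw [← hvar]
            have := my_integral_pi_eval μ (fun a : ℝ => a ^ 2) i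
            rw [← this]
            exact integral_congr_ae (ae_of_all _ fun e => by ring)
          rw [this, myInd_sq]
        · have h0 : ∫ e : Fin n → ℝ, e i * e k ∂(Measure.pi fun _ : Fin n => μ)
              = (∫ a : ℝ, a ∂μ) * ∫ a : ℝ, a ∂μ :=
            my_integral_pi_eval₂ μ (g := fun a : ℝ => a) (g' := fun a : ℝ => a) i k (Ne.symm hk)
          rw [hterm i k, h0, hmean, zero_mul, mul_zero]
    _ = σ ^ 2 * myS B x := by rw [myS, Finset.mul_sum]; exact Finset.sum_congr rfl fun i _ => by ring

end cell2

section cell3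
variable {α : Type*} [MeasurableSpace α] {n : ℕ} {B : Set α} {p : ℝ}
  (νX : Measure α) [IsProbabilityMeasure νX]

lemma myInd_integrable (hB : MeasurableSet B) : Integrable (myInd B) νX :=
  (integrable_const (1 : ℝ)).indicator hB

lemma myInd_integral (hB : MeasurableSet B) (hBp : νX B = ENNReal.ofReal p) (hp : 0 ≤ p) :
    ∫ y, myInd B y ∂νX = p := by
  rw [show myInd B = B.indicator (fun _ => (1:ℝ)) from rfl, integral_indicator_const _ hB,
    measureReal_def, hBp, ENNReal.toReal_ofReal hp, smul_eq_mul, mul_one]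

lemma myS_integrable (hB : MeasurableSet B) :
    Integrable (fun x : Fin n → α => myS B x) (Measure.pi fun _ : Fin n => νX) :=
  integrable_finset_sum _ fun i _ => my_integrable_pi_eval νX (myInd_integrable νX hB) i

lemma myS_integral (hB : MeasurableSet B) (hBp : νX B = ENNReal.ofReal p) (hp : 0 ≤ p) :
    ∫ x, myS B x ∂(Measure.pi fun _ : Fin n => νX) = n * p := by
  rw [show (fun x : Fin n → α => myS B x) = fun x => ∑ i, myInd B (x i) from rfl,
    integral_finset_sum _ fun i _ => my_integrable_pi_eval νX (myInd_integrable νX hB) i]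
  have : ∀ i : Fin n, ∫ x : Fin n → α, myInd B (x i) ∂(Measure.pi fun _ : Fin n => νX) = p :=
    fun i => by rw [my_integral_pi_eval νX (myInd B) i, myInd_integral νX hB hBp hp]
  simp [this]

noncomputable def myL (B : Set α) (x : Fin n → α) : ℝ := ∏ i, (1 - myInd B (x i))

lemma myL_integrable (hB : MeasurableSet B) :
    Integrable (fun x : Fin n → α => myL B x) (Measure.pi fun _ : Fin n => νX) :=
  my_integrable_pi_prod νX (g := fun _ y => 1 - myInd B y)
    (fun _ => (integrable_const 1).sub (myInd_integrable νX hB))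

lemma myL_integral (hB : MeasurableSet B) (hBp : νX B = ENNReal.ofReal p) (hp : 0 ≤ p) :
    ∫ x, myL B x ∂(Measure.pi fun _ : Fin n => νX) = (1 - p) ^ n := by
  have := my_integral_pi_prod (ι := Fin n) νX (fun _ y => 1 - myInd B y)
  rw [show (fun x : Fin n → α => myL B x)
    = fun x => ∏ i, (fun _ y => 1 - myInd B y) i (x i) from rfl, this]
  have h1 : ∫ y, 1 - myInd B y ∂νX = 1 - p := by
    rw [integral_sub (integrable_const 1) (myInd_integrable νX hB),
      myInd_integral νX hB hBp hp]
    simp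
  simp [h1]

lemma myL_of_S_zero {x : Fin n → α} (hx : myS B x = 0) : myL B x = 1 := by
  rw [myL]
  exact Finset.prod_eq_one fun i _ => by rw [myS_zero_ind hx i, sub_zero]

lemma myL_of_S_pos {x : Fin n → α} (hx : 1 ≤ myS B x) : myL B x = 0 := by
  have : ∃ i, myInd B (x i) ≠ 0 := by
    by_contra hcon
    push_neg at hcon
    have : myS B x = 0 := Finset.sum_eq_zero fun i _ => hcon i
    linarith
  obtain ⟨i, hi⟩ := this
  have h1 : myInd B (x i) = 1 := (myInd_01 (x i)).resolve_left hi
  exact Finset.prod_eq_zero (Finset.mem_univ i) (by rw [h1, sub_self])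

/-- the key harmonic bound: `∫ 1_{S≥1}/S ≥ (1 - 2(1-p)^n)/(np)` -/
lemma my_I0_bound (hB : MeasurableSet B) (hBp : νX B = ENNReal.ofReal p)
    (hp : 0 < p) (hnp : 1 ≤ (n : ℝ) * p) :
    (1 - 2 * (1 - p) ^ n) / ((n : ℝ) * p)
      ≤ ∫ x, (if 1 ≤ myS B x then (myS B x)⁻¹ else 0) ∂(Measure.pi fun _ : Fin n => νX) := by
  set a : ℝ := (n : ℝ) * p with ha
  have ha0 : 0 < a := lt_of_lt_of_le one_pos hnp
  set K : (Fin n → α) → ℝ := fun x => (2 * a - myS B x) / a ^ 2 - (2 / a) * myL B x with hK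
  have hKint : Integrable K (Measure.pi fun _ : Fin n => νX) := by
    refine Integrable.sub ?_ ((myL_integrable νX hB).const_mul _)
    exact ((integrable_const (2 * a)).sub (myS_integrable νX hB)).div_const _
  have hI0meas : Measurable fun x : Fin n → α => (if 1 ≤ myS B x then (myS B x)⁻¹ else 0) := by
    exact Measurable.ite (measurableSet_le measurable_const (myS_meas hB))
      (myS_meas hB).inv measurable_const
  have hI0int : Integrable (fun x : Fin n → α => (if 1 ≤ myS B x then (myS B x)⁻¹ else 0))
      (Measure.pi fun _ : Fin n => νX) := by
    refine (integrable_const (1 : ℝ)).mono' hI0meas.aestronglyMeasurable (ae_of_all _ fun x => ?_)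
    by_cases hx : 1 ≤ myS B x
    · rw [if_pos hx]
      rw [Real.norm_eq_abs, abs_of_nonneg (inv_nonneg.2 (by linarith))]
      first
      | exact inv_le_one_of_one_le₀ hx
      | exact inv_le_one hx
      | exact inv_le_one_iff_one_le.2 hx
    · simp [if_neg hx]
  have hpt : ∀ x, K x ≤ (if 1 ≤ myS B x then (myS B x)⁻¹ else 0) := by
    intro x
    rcases myS_cases (B := B) x with hx | hx
    · rw [if_neg (by rw [hx]; norm_num), hK]
      simp only [hx, sub_zero, myL_of_S_zero hx, mul_one]
      rw [sub_nonpos, sq]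
      rw [div_le_div_iff₀ (by positivity) ha0]
      ring_nf
      nlinarith
    · rw [if_pos hx]
      show (2 * a - myS B x) / a ^ 2 - 2 / a * myL B x ≤ (myS B x)⁻¹
      rw [myL_of_S_pos hx, mul_zero, sub_zero]
      have hS0 : 0 < myS B x := lt_of_lt_of_le one_pos hx
      rw [inv_eq_one_div, div_le_div_iff₀ (by positivity) hS0]
      nlinarith [sq_nonneg (a - myS B x)]
  have hKval : ∫ x, K x ∂(Measure.pi fun _ : Fin n => νX)
      = (1 - 2 * (1 - p) ^ n) / a := by
    have hrfl : ∫ x, K x ∂(Measure.pi fun _ : Fin n => νX)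
        = ∫ x, ((2 * a - myS B x) / a ^ 2 - (2 / a) * myL B x)
            ∂(Measure.pi fun _ : Fin n => νX) := rfl
    have hKint1 : Integrable (fun x : Fin n → α => (2 * a - myS B x) / a ^ 2)
        (Measure.pi fun _ : Fin n => νX) :=
      ((integrable_const (2 * a)).sub (myS_integrable νX hB)).div_const _
    have hKint2 : Integrable (fun x : Fin n → α => (2 / a) * myL B x)
        (Measure.pi fun _ : Fin n => νX) := (myL_integrable νX hB).const_mul _
    rw [hrfl, integral_sub hKint1 hKint2]
    rw [integral_div, integral_sub (integrable_const (2 * a)) (myS_integrable νX hB),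
      integral_const, integral_const_mul, myL_integral νX hB hBp hp.le,
      myS_integral νX hB hBp hp.le]
    simp only [measureReal_def, measure_univ, ENNReal.toReal_one, smul_eq_mul, one_mul]
    field_simp
    ring
  calc (1 - 2 * (1 - p) ^ n) / a = ∫ x, K x ∂(Measure.pi fun _ : Fin n => νX) := hKval.symm
    _ ≤ _ := integral_mono hKint hI0int hpt

end cell3

section cell4
variable {α : Type*} [MeasurableSpace α] {n : ℕ} {B : Set α} {p σ M : ℝ}

lemma my_I0_integrable (νX : Measure α) [IsProbabilityMeasure νX] (hB : MeasurableSet B) :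
    Integrable (fun x : Fin n → α => (if 1 ≤ myS B x then (myS B x)⁻¹ else 0))
      (Measure.pi fun _ : Fin n => νX) := by
  have hI0meas : Measurable fun x : Fin n → α => (if 1 ≤ myS B x then (myS B x)⁻¹ else 0) :=
    Measurable.ite (measurableSet_le measurable_const (myS_meas hB))
      (myS_meas hB).inv measurable_const
  refine (integrable_const (1 : ℝ)).mono' hI0meas.aestronglyMeasurable (ae_of_all _ fun x => ?_)
  by_cases hx : 1 ≤ myS B x
  · rw [if_pos hx, Real.norm_eq_abs, abs_of_nonneg (inv_nonneg.2 (by linarith))]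
    exact inv_le_one_of_one_le₀ hx
  · simp [if_neg hx]

lemma my_inner_e (μ : Measure ℝ) [IsProbabilityMeasure μ]
    (hint1 : Integrable (fun e : ℝ => e) μ) (hint2 : Integrable (fun e : ℝ => e ^ 2) μ)
    (hmean : ∫ e, e ∂μ = 0) (hvar : ∫ e, e ^ 2 ∂μ = σ ^ 2)
    (f : α → ℝ) (b : ℝ) (x : Fin n → α) (hx : 1 ≤ myS B x) :
    σ ^ 2 * (myS B x)⁻¹
      ≤ ∫ e, ((myF f B x + myT B x e) / myS B x - b) ^ 2 ∂(Measure.pi fun _ : Fin n => μ) := by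
  have hSpos : 0 < myS B x := lt_of_lt_of_le one_pos hx
  have hSne : myS B x ≠ 0 := hSpos.ne'
  set S := myS B x with hS
  set F := myF f B x with hF
  set G := F - b * S with hG
  have hptw : ∀ e : Fin n → ℝ, ((F + myT B x e) / S - b) ^ 2
      = (S⁻¹) ^ 2 * G ^ 2 + (2 * G * (S⁻¹) ^ 2) * myT B x e
        + (S⁻¹) ^ 2 * (myT B x e) ^ 2 := by
    intro e
    rw [hG]
    field_simp
    ring
  rw [integral_congr_ae (ae_of_all _ hptw)]
  have I1 : Integrable (fun _ : Fin n → ℝ => (S⁻¹) ^ 2 * G ^ 2)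
      (Measure.pi fun _ : Fin n => μ) := integrable_const _
  have I2 : Integrable (fun e : Fin n → ℝ => (2 * G * (S⁻¹) ^ 2) * myT B x e)
      (Measure.pi fun _ : Fin n => μ) := (myT_integrable μ hint1 x).const_mul _
  have I3 : Integrable (fun e : Fin n → ℝ => (S⁻¹) ^ 2 * (myT B x e) ^ 2)
      (Measure.pi fun _ : Fin n => μ) := (myT_sq_integrable μ hint1 hint2 x).const_mul _
  have I12 : Integrable (fun e : Fin n → ℝ =>
      (S⁻¹) ^ 2 * G ^ 2 + (2 * G * (S⁻¹) ^ 2) * myT B x e)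
      (Measure.pi fun _ : Fin n => μ) := I1.add I2
  rw [integral_add I12 I3, integral_add I1 I2, integral_const, integral_const_mul,
    integral_const_mul, myT_mean μ hint1 hmean x, myT_sq_integral μ hint1 hint2 hmean hvar x]
  simp only [measureReal_def, measure_univ, ENNReal.toReal_one, smul_eq_mul, one_mul, mul_zero, add_zero]
  have h1 : (S⁻¹) ^ 2 * (σ ^ 2 * S) = σ ^ 2 * S⁻¹ := by
    field_simp
  have h2 : 0 ≤ (S⁻¹) ^ 2 * G ^ 2 := by positivity
  linarith

end cell4

section cell5
variable {α : Type*} [MeasurableSpace α] {n : ℕ} {B : Set α} {p σ M : ℝ}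

theorem my_cell (νX : Measure α) [IsProbabilityMeasure νX] (μ : Measure ℝ)
    [IsProbabilityMeasure μ]
    (hint1 : Integrable (fun e : ℝ => e) μ) (hint2 : Integrable (fun e : ℝ => e ^ 2) μ)
    (hmean : ∫ e, e ∂μ = 0) (hvar : ∫ e, e ^ 2 ∂μ = σ ^ 2)
    (hB : MeasurableSet B) (hBp : νX B = ENNReal.ofReal p) (hp : 0 < p)
    (f : α → ℝ) (hf : Measurable f) (hfb : ∀ y, |f y| ≤ M)
    (b : ℝ) (hb : |b| ≤ M) (hnp : 1 ≤ (n : ℝ) * p) :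
    Integrable (fun ω : Fin n → α × ℝ =>
        ((myF f B (fun i => (ω i).1) + myT B (fun i => (ω i).1) (fun i => (ω i).2))
          / myS B (fun i => (ω i).1) - b) ^ 2)
      (Measure.pi fun _ : Fin n => νX.prod μ)
    ∧ σ ^ 2 * ((1 - 2 * (1 - p) ^ n) / ((n : ℝ) * p))
      ≤ ∫ ω : Fin n → α × ℝ,
          ((myF f B (fun i => (ω i).1) + myT B (fun i => (ω i).1) (fun i => (ω i).2))
            / myS B (fun i => (ω i).1) - b) ^ 2
        ∂(Measure.pi fun _ : Fin n => νX.prod μ) := by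
  have hM0 : 0 ≤ M := le_trans (abs_nonneg b) hb
  set νn := (Measure.pi fun _ : Fin n => νX) with hνn
  set μn := (Measure.pi fun _ : Fin n => μ) with hμn
  set Q := νn.prod μn with hQ
  set g : (Fin n → α) × (Fin n → ℝ) → ℝ :=
    fun z => ((myF f B z.1 + myT B z.1 z.2) / myS B z.1 - b) ^ 2 with hgdef
  have hΦ : MeasurePreserving (MeasurableEquiv.arrowProdEquivProdArrow α ℝ (Fin n))
      (Measure.pi fun _ : Fin n => νX.prod μ) Q :=
    measurePreserving_arrowProdEquivProdArrow α ℝ (Fin n) (fun _ => νX) (fun _ => μ)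
  -- measurability of g
  have hSmeas : Measurable (myS B (n := n)) := myS_meas hB
  have hFmeas : Measurable (myF f B (n := n)) :=
    Finset.measurable_sum _ fun i _ => (hf.comp (measurable_pi_apply i)).mul
      ((myInd_meas hB).comp (measurable_pi_apply i))
  have hTmeas : Measurable fun z : (Fin n → α) × (Fin n → ℝ) => myT B z.1 z.2 :=
    Finset.measurable_sum _ fun i _ =>
      (((measurable_pi_apply i).comp measurable_snd)).mul
        ((myInd_meas hB).comp ((measurable_pi_apply i).comp measurable_fst))
  have hgmeas : Measurable g := by
    apply Measurable.pow_const
    exact (((hFmeas.comp measurable_fst).add hTmeas).div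
      (hSmeas.comp measurable_fst)).sub measurable_const
  -- pointwise bound for g
  have hgbound : ∀ z : (Fin n → α) × (Fin n → ℝ),
      g z ≤ 8 * M ^ 2 + 2 * (∑ i, |z.2 i|) ^ 2 := by
    rintro ⟨x, e⟩
    rcases myS_cases (B := B) x with hx | hx
    · have hF0 : myF f B x = 0 :=
        Finset.sum_eq_zero fun i _ => by rw [myS_zero_ind hx i, mul_zero]
      have hT0 : myT B x e = 0 :=
        Finset.sum_eq_zero fun i _ => by rw [myS_zero_ind hx i, mul_zero]
      have : g (x, e) = b ^ 2 := by
        simp [hgdef, hF0, hT0, hx]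
      rw [this]
      have := abs_le.1 hb
      nlinarith [sq_nonneg (∑ i, |e i|)]
    · have hSpos : 0 < myS B x := lt_of_lt_of_le one_pos hx
      have habs : |(myF f B x + myT B x e) / myS B x - b| ≤ 2 * M + ∑ i, |e i| := by
        have h1 : |(myF f B x + myT B x e) / myS B x| ≤ M + ∑ i, |e i| := by
          rw [abs_div, abs_of_pos hSpos, div_le_iff₀ hSpos]
          have h2 : |myF f B x + myT B x e| ≤ M * myS B x + ∑ i, |e i| := by
            calc |myF f B x + myT B x e| ≤ |myF f B x| + |myT B x e| := abs_add_le _ _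
              _ ≤ M * myS B x + ∑ i, |e i| :=
                add_le_add (myF_bound hfb x) (myT_abs_le x e)
          have h3 : (∑ i, |e i|) * 1 ≤ (∑ i, |e i|) * myS B x :=
            mul_le_mul_of_nonneg_left hx (Finset.sum_nonneg fun i _ => abs_nonneg _)
          nlinarith [Finset.sum_nonneg (fun i (_ : i ∈ Finset.univ) => abs_nonneg (e i))]
        calc |(myF f B x + myT B x e) / myS B x - b|
            ≤ |(myF f B x + myT B x e) / myS B x| + |b| := abs_sub _ _
          _ ≤ (M + ∑ i, |e i|) + M := add_le_add h1 hb
          _ = 2 * M + ∑ i, |e i| := by ring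
      have h4 := abs_le.1 habs
      have h5 : (0:ℝ) ≤ ∑ i, |e i| := Finset.sum_nonneg fun i _ => abs_nonneg _
      show ((myF f B x + myT B x e) / myS B x - b) ^ 2 ≤ _
      nlinarith [sq_nonneg (2 * M - ∑ i, |e i|)]
  -- integrability of the majorant
  have hVint : Integrable (fun e : Fin n → ℝ => (∑ i, |e i|) ^ 2) μn := by
    have hexp : (fun e : Fin n → ℝ => (∑ i, |e i|) ^ 2)
        = fun e => ∑ i, ∑ k, |e i| * |e k| := by
      funext e
      rw [sq, Finset.sum_mul_sum]
    rw [hexp]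
    refine integrable_finset_sum _ fun i _ => integrable_finset_sum _ fun k _ => ?_
    by_cases hik : i = k
    · subst hik
      exact (my_integrable_pi_eval μ hint2 i).congr
        (ae_of_all _ fun e => by
          show (e i) ^ 2 = |e i| * |e i|
          rw [abs_mul_abs_self, sq])
    · exact my_integrable_pi_eval₂ μ (g := fun a => |a|) (g' := fun a => |a|)
        hint1.abs hint1.abs i k hik
  have hWQ : Integrable (fun z : (Fin n → α) × (Fin n → ℝ) =>
      8 * M ^ 2 + 2 * (∑ i, |z.2 i|) ^ 2) Q := by
    refine (integrable_const _).add ?_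
    have := (Integrable.mul_prod (integrable_const (1:ℝ)) (hVint.const_mul 2) :
      Integrable (fun z : (Fin n → α) × (Fin n → ℝ) => (1:ℝ) * (2 * (∑ i, |z.2 i|) ^ 2)) Q)
    exact this.congr (ae_of_all _ fun z => by show (1:ℝ) * _ = _; rw [one_mul])
  have hgint : Integrable g Q := by
    refine hWQ.mono' hgmeas.aestronglyMeasurable (ae_of_all _ fun z => ?_)
    rw [Real.norm_eq_abs, abs_of_nonneg (sq_nonneg _)]
    exact hgbound z
  -- integrability of D over P
  have hDint : Integrable (g ∘ (MeasurableEquiv.arrowProdEquivProdArrow α ℝ (Fin n)))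
      (Measure.pi fun _ : Fin n => νX.prod μ) :=
    (hΦ.integrable_comp_emb (MeasurableEquiv.measurableEmbedding _)).2 hgint
  have hDeq : ∫ ω : Fin n → α × ℝ,
      ((myF f B (fun i => (ω i).1) + myT B (fun i => (ω i).1) (fun i => (ω i).2))
        / myS B (fun i => (ω i).1) - b) ^ 2
      ∂(Measure.pi fun _ : Fin n => νX.prod μ) = ∫ z, g z ∂Q := hΦ.integral_comp' g
  refine ⟨hDint, ?_⟩
  rw [hDeq]
  -- lower bound via H
  set H : (Fin n → α) × (Fin n → ℝ) → ℝ :=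
    fun z => if 1 ≤ myS B z.1 then g z else 0 with hHdef
  have hHmeas : Measurable H :=
    Measurable.ite (measurableSet_le measurable_const (hSmeas.comp measurable_fst))
      hgmeas measurable_const
  have hHle : ∀ z, H z ≤ g z := by
    intro z
    by_cases hz : 1 ≤ myS B z.1
    · exact le_of_eq (by show (if 1 ≤ myS B z.1 then g z else 0) = g z; rw [if_pos hz])
    · refine le_trans (le_of_eq ?_) (sq_nonneg _)
      show (if 1 ≤ myS B z.1 then g z else 0) = 0
      rw [if_neg hz]
  have hHint : Integrable H Q := by
    refine hgint.mono' hHmeas.aestronglyMeasurable (ae_of_all _ fun z => ?_)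
    rw [Real.norm_eq_abs]
    by_cases hz : 1 ≤ myS B z.1
    · have h1 : H z = g z := by show (if 1 ≤ myS B z.1 then g z else 0) = g z; rw [if_pos hz]
      rw [h1, abs_of_nonneg (sq_nonneg _)]
    · have h1 : H z = 0 := by show (if 1 ≤ myS B z.1 then g z else 0) = 0; rw [if_neg hz]
      rw [h1, abs_zero]
      exact sq_nonneg _
  have hHineq : ∫ z, H z ∂Q ≤ ∫ z, g z ∂Q := integral_mono hHint hgint hHle
  have hHprod : ∫ z, H z ∂Q = ∫ x, ∫ e, H (x, e) ∂μn ∂νn := integral_prod H hHint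
  -- inner bound
  set J : (Fin n → α) → ℝ :=
    fun x => σ ^ 2 * (if 1 ≤ myS B x then (myS B x)⁻¹ else 0) with hJdef
  have hinner : ∀ x, J x ≤ ∫ e, H (x, e) ∂μn := by
    intro x
    rcases myS_cases (B := B) x with hx | hx
    · have hc : ¬ (1 ≤ myS B x) := by rw [hx]; norm_num
      have : ∀ e : Fin n → ℝ, H (x, e) = 0 := fun e => by rw [hHdef]; simp [hc]
      rw [hJdef]
      simp [this, hc]
    · have : ∀ e : Fin n → ℝ, H (x, e) = ((myF f B x + myT B x e) / myS B x - b) ^ 2 :=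
        fun e => by rw [hHdef]; exact if_pos hx
      rw [hJdef]
      simp only [if_pos hx]
      calc σ ^ 2 * (myS B x)⁻¹
          ≤ ∫ e, ((myF f B x + myT B x e) / myS B x - b) ^ 2 ∂μn :=
            my_inner_e μ hint1 hint2 hmean hvar f b x hx
        _ = ∫ e, H (x, e) ∂μn := by
            exact (integral_congr_ae (ae_of_all _ fun e => (this e))).symm
  have hJint : Integrable J νn := (my_I0_integrable νX hB).const_mul _
  have hIPL : Integrable (fun x => ∫ e, H (x, e) ∂μn) νn := hHint.integral_prod_left
  have hJle : ∫ x, J x ∂νn ≤ ∫ x, ∫ e, H (x, e) ∂μn ∂νn := integral_mono hJint hIPL hinner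
  have hJval : σ ^ 2 * ((1 - 2 * (1 - p) ^ n) / ((n : ℝ) * p)) ≤ ∫ x, J x ∂νn := by
    rw [hJdef]
    have : ∫ x, σ ^ 2 * (if 1 ≤ myS B x then (myS B x)⁻¹ else 0) ∂νn
        = σ ^ 2 * ∫ x, (if 1 ≤ myS B x then (myS B x)⁻¹ else 0) ∂νn := integral_const_mul _ _
    rw [this]
    exact mul_le_mul_of_nonneg_left (my_I0_bound νX hB hBp hp hnp) (sq_nonneg σ)
  calc σ ^ 2 * ((1 - 2 * (1 - p) ^ n) / ((n : ℝ) * p)) ≤ ∫ x, J x ∂νn := hJval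
    _ ≤ ∫ x, ∫ e, H (x, e) ∂μn ∂νn := hJle
    _ = ∫ z, H z ∂Q := hHprod.symm
    _ ≤ ∫ z, g z ∂Q := hHineq

end cell5




/-- Sample-error (variance) lower bound for a single histogram regressor in the
regression model `Y = f(X) + ε`: for a histogram partition `A_1, …, A_N` of
`[0,1]^d` with `N = h^{-d}` cells each of `ν_X`-measure `h^d`, centered noise
`ε ~ μ` with variance `σ²` independent of `X ~ ν_X`, a bounded measurable
regression function `|f| ≤ M`, and `n h^d ≥ 1`, the expected squared
`L²(ν_X)` distance between the empirical histogram regressor and the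
population histogram regressor is at least `σ² / (8 n h^d)`. -/
theorem stmt_13 (d n N : ℕ) (hd : 1 ≤ d) (hn : 1 ≤ n) (hN : 1 ≤ N)
    (M h : ℝ) (hM : 0 < M) (hh : h ∈ Set.Ioc (0 : ℝ) 1)
    (hNh : (N : ℝ) = (h ^ d)⁻¹)
    (A : Fin N → Set (Fin d → ℝ)) (hmeas : ∀ j, MeasurableSet (A j))
    (hdisj : Pairwise fun i j => Disjoint (A i) (A j))
    (hcover : (⋃ j, A j) = Set.Icc (0 : Fin d → ℝ) 1)
    (νX : Measure (Fin d → ℝ)) [IsProbabilityMeasure νX]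
    (hX1 : νX (Set.Icc (0 : Fin d → ℝ) 1) = 1)
    (hAj : ∀ j, νX (A j) = ENNReal.ofReal (h ^ d))
    (μ : Measure ℝ) [IsProbabilityMeasure μ] (σ : ℝ)
    (hint1 : Integrable (fun e : ℝ => e) μ)
    (hint2 : Integrable (fun e : ℝ => e ^ 2) μ)
    (hmean : ∫ e, e ∂μ = 0) (hvar : ∫ e, e ^ 2 ∂μ = σ ^ 2)
    (f : (Fin d → ℝ) → ℝ) (hfmeas : Measurable f) (hfbdd : ∀ x, |f x| ≤ M)
    (hnh : 1 ≤ (n : ℝ) * h ^ d) :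
    σ ^ 2 / (8 * (n : ℝ) * h ^ d)
      ≤ ∫ ω : Fin n → (Fin d → ℝ) × ℝ,
          (∫ x in Set.Icc (0 : Fin d → ℝ) 1,
              ((∑ j, ((∑ i, (A j).indicator (fun _ => f (ω i).1 + (ω i).2) (ω i).1)
                        / (∑ i, (A j).indicator (fun _ => (1 : ℝ)) (ω i).1))
                       * (A j).indicator 1 x)
                - ∑ j, ((h ^ d)⁻¹ * ∫ y in A j, f y ∂νX)
                       * (A j).indicator 1 x) ^ 2
            ∂νX)
        ∂(Measure.pi fun _ : Fin n => νX.prod μ) := by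
  have hp : 0 < h ^ d := pow_pos hh.1 d
  have hp1 : h ^ d ≤ 1 := pow_le_one₀ hh.1.le hh.2
  have hnp0 : 0 < (n : ℝ) * h ^ d := lt_of_lt_of_le one_pos hnh
  -- the population coefficients are bounded by M
  have hb : ∀ j, |(h ^ d)⁻¹ * ∫ y in A j, f y ∂νX| ≤ M := by
    intro j
    rw [abs_mul, abs_inv, abs_of_pos hp]
    have h1 : ‖∫ y in A j, f y ∂νX‖ ≤ M * ((νX.restrict (A j)) Set.univ).toReal := by
      apply norm_integral_le_of_norm_le_const
      exact ae_of_all _ fun y => by rw [Real.norm_eq_abs]; exact hfbdd y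
    rw [Measure.restrict_apply_univ, hAj j, ENNReal.toReal_ofReal hp.le,
      Real.norm_eq_abs] at h1
    calc (h ^ d)⁻¹ * |∫ y in A j, f y ∂νX| ≤ (h ^ d)⁻¹ * (M * h ^ d) :=
        mul_le_mul_of_nonneg_left h1 (inv_nonneg.2 hp.le)
      _ = M := by field_simp
  -- the per-cell results
  have hcell := fun j : Fin N => my_cell (p := h ^ d) (σ := σ) (M := M) νX μ
    hint1 hint2 hmean hvar (hmeas j) (hAj j) hp f hfmeas hfbdd
    ((h ^ d)⁻¹ * ∫ y in A j, f y ∂νX) (hb j) hnh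
  -- rewrite the inner integral
  have hnum : ∀ (j : Fin N) (ω : Fin n → (Fin d → ℝ) × ℝ),
      (∑ i, (A j).indicator (fun _ => f (ω i).1 + (ω i).2) (ω i).1)
        = myF f (A j) (fun i => (ω i).1)
          + myT (A j) (fun i => (ω i).1) (fun i => (ω i).2) := by
    intro j ω
    rw [myF, myT, ← Finset.sum_add_distrib]
    refine Finset.sum_congr rfl fun i _ => ?_
    by_cases hi : (ω i).1 ∈ A j
    · simp only [Set.indicator_of_mem hi, myInd, Pi.one_apply]
      ring
    · simp [Set.indicator_of_notMem hi, myInd]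
  have horig : ∀ ω : Fin n → (Fin d → ℝ) × ℝ,
      (∫ x in Set.Icc (0 : Fin d → ℝ) 1,
          ((∑ j, ((∑ i, (A j).indicator (fun _ => f (ω i).1 + (ω i).2) (ω i).1)
                    / (∑ i, (A j).indicator (fun _ => (1 : ℝ)) (ω i).1))
                   * (A j).indicator 1 x)
            - ∑ j, ((h ^ d)⁻¹ * ∫ y in A j, f y ∂νX)
                   * (A j).indicator 1 x) ^ 2
        ∂νX)
      = ∑ j, ((myF f (A j) (fun i => (ω i).1)
              + myT (A j) (fun i => (ω i).1) (fun i => (ω i).2))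
            / myS (A j) (fun i => (ω i).1)
            - ((h ^ d)⁻¹ * ∫ y in A j, f y ∂νX)) ^ 2 * h ^ d := by
    intro ω
    have h1 : ∀ x : Fin d → ℝ,
        ((∑ j, ((∑ i, (A j).indicator (fun _ => f (ω i).1 + (ω i).2) (ω i).1)
                  / (∑ i, (A j).indicator (fun _ => (1 : ℝ)) (ω i).1))
                 * (A j).indicator 1 x)
          - ∑ j, ((h ^ d)⁻¹ * ∫ y in A j, f y ∂νX) * (A j).indicator 1 x)
        = ∑ j, (((myF f (A j) (fun i => (ω i).1)
              + myT (A j) (fun i => (ω i).1) (fun i => (ω i).2))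
            / myS (A j) (fun i => (ω i).1)
            - ((h ^ d)⁻¹ * ∫ y in A j, f y ∂νX)) * (A j).indicator 1 x) := by
      intro x
      rw [← Finset.sum_sub_distrib]
      refine Finset.sum_congr rfl fun j _ => ?_
      rw [← sub_mul, hnum j ω]
      rfl
    calc _ = ∫ x in Set.Icc (0 : Fin d → ℝ) 1,
          (∑ j, (((myF f (A j) (fun i => (ω i).1)
              + myT (A j) (fun i => (ω i).1) (fun i => (ω i).2))
            / myS (A j) (fun i => (ω i).1)
            - ((h ^ d)⁻¹ * ∫ y in A j, f y ∂νX)) * (A j).indicator 1 x)) ^ 2 ∂νX := by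
          exact integral_congr_ae (ae_of_all _ fun x => by beta_reduce; rw [h1 x])
      _ = _ := my_inner_integral hp A hmeas hdisj hcover νX hAj _
  rw [integral_congr_ae (ae_of_all _ horig),
    integral_finset_sum _ (fun j _ => ((hcell j).1.mul_const (h ^ d)))]
  have hval : ∀ j : Fin N,
      (σ ^ 2 * ((1 - 2 * (1 - h ^ d) ^ n) / ((n : ℝ) * h ^ d))) * h ^ d
        ≤ ∫ ω : Fin n → (Fin d → ℝ) × ℝ,
            ((myF f (A j) (fun i => (ω i).1)
              + myT (A j) (fun i => (ω i).1) (fun i => (ω i).2))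
            / myS (A j) (fun i => (ω i).1)
            - ((h ^ d)⁻¹ * ∫ y in A j, f y ∂νX)) ^ 2 * h ^ d
          ∂(Measure.pi fun _ : Fin n => νX.prod μ) := by
    intro j
    rw [integral_mul_const]
    exact mul_le_mul_of_nonneg_right (hcell j).2 hp.le
  refine le_trans ?_ (Finset.sum_le_sum fun j (_ : j ∈ Finset.univ) => hval j)
  rw [Finset.sum_const, Finset.card_univ, Fintype.card_fin, nsmul_eq_mul, hNh]
  -- numeric endgame
  have hexp : (1 - h ^ d) ^ n ≤ Real.exp (-1) := by
    calc (1 - h ^ d) ^ n ≤ (Real.exp (-(h ^ d))) ^ n := by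
          refine pow_le_pow_left₀ (by linarith) ?_ n
          linarith [Real.add_one_le_exp (-(h ^ d))]
      _ = Real.exp ((n : ℝ) * (-(h ^ d))) := (Real.exp_nat_mul _ n).symm
      _ ≤ Real.exp (-1) := Real.exp_le_exp.2 (by nlinarith)
  have hexp2 : Real.exp (-1) ≤ 7 / 16 := by
    have h9 := Real.exp_one_gt_d9
    rw [Real.exp_neg]
    have h16 : (16 : ℝ) / 7 ≤ Real.exp 1 := by nlinarith
    calc (Real.exp 1)⁻¹ ≤ ((16 : ℝ) / 7)⁻¹ := by
          apply inv_anti₀ (by norm_num) h16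
      _ = 7 / 16 := by norm_num
  have hq : 1 / 8 ≤ 1 - 2 * (1 - h ^ d) ^ n := by nlinarith
  have heq : (h ^ d)⁻¹ * ((σ ^ 2 * ((1 - 2 * (1 - h ^ d) ^ n) / ((n : ℝ) * h ^ d))) * h ^ d)
      = σ ^ 2 * ((1 - 2 * (1 - h ^ d) ^ n) / ((n : ℝ) * h ^ d)) := by
    field_simp
  rw [heq]
  rw [div_le_iff₀ (by positivity), mul_comm (8 : ℝ) (n : ℝ), mul_assoc]
  rw [div_eq_mul_inv, mul_assoc]
  have hfin : (1 : ℝ) ≤ ((1 - 2 * (1 - h ^ d) ^ n) * ((n : ℝ) * h ^ d)⁻¹) * ((n : ℝ) * (h ^ d * 8)) := by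
    have : ((1 - 2 * (1 - h ^ d) ^ n) * ((n : ℝ) * h ^ d)⁻¹) * ((n : ℝ) * (h ^ d * 8))
        = (1 - 2 * (1 - h ^ d) ^ n) * 8 := by
      field_simp
    rw [this]
    linarith
  nlinarith [sq_nonneg σ, hfin, mul_le_mul_of_nonneg_left hfin (sq_nonneg σ)]
end
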